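/- arXiv:1612.06193 — 4 statements merged into one kernel-verified Lean document; each statement's English description precedes it below -/
import Mathlib

section
/- Assume m_1 > 0 and m_2 > 0. For every compact set K ⊂ ℝ there exists a constant C_M = C_M(K) > 0 such that: for every ε ∈ (0,1] and every admissible solution (n_1, n_2) of the system (S_ε) with N_1 + N_2 ≤ 2 max(r_1, r_2), one has n_i(x) ≤ C_M n_j(y) for all i, j ∈ {1,2} and all x, y ∈ K with |x − y| ≤ ε. -/
open Real Set Filter MeasureTheory

noncomputable def R1 (θ r1 r2 g1 g2 κ1 κ2 m1 m2 z N : ℝ) : ℝ :=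
  r1 - g1 * (z + θ) ^ 2 - κ1 * N

noncomputable def R2 (θ r1 r2 g1 g2 κ1 κ2 m1 m2 z N : ℝ) : ℝ :=
  r2 - g2 * (z - θ) ^ 2 - κ2 * N

noncomputable def W (θ r1 r2 g1 g2 κ1 κ2 m1 m2 z N1 N2 : ℝ) : ℝ :=
  (R1 θ r1 r2 g1 g2 κ1 κ2 m1 m2 z N1 + R2 θ r1 r2 g1 g2 κ1 κ2 m1 m2 z N2 - m1 - m2 +
    Real.sqrt ((R1 θ r1 r2 g1 g2 κ1 κ2 m1 m2 z N1 - R2 θ r1 r2 g1 g2 κ1 κ2 m1 m2 z N2 - m1 + m2) ^ 2 + 4 * m1 * m2)) / 2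

/-- An admissible solution: a pair of positive `C²` functions, integrable together with
`z ↦ z² nᵢ z`, vanishing (with their derivatives) at infinity. -/
def IsAdmissible (n1 n2 : ℝ → ℝ) : Prop :=
  (∀ z, 0 < n1 z) ∧ (∀ z, 0 < n2 z) ∧
  ContDiff ℝ 2 n1 ∧ ContDiff ℝ 2 n2 ∧
  Integrable n1 ∧ Integrable n2 ∧
  Integrable (fun z => z ^ 2 * n1 z) ∧ Integrable (fun z => z ^ 2 * n2 z) ∧
  Tendsto n1 (cocompact ℝ) (nhds 0) ∧ Tendsto n2 (cocompact ℝ) (nhds 0) ∧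
  Tendsto (deriv n1) (cocompact ℝ) (nhds 0) ∧ Tendsto (deriv n2) (cocompact ℝ) (nhds 0)

/-- `(n1, n2)` solves the stationary mutation-selection-migration system `(S_ε)`. -/
def SolvesS (θ r1 r2 g1 g2 κ1 κ2 m1 m2 ε : ℝ) (n1 n2 : ℝ → ℝ) : Prop :=
  ∀ z : ℝ,
    -(ε ^ 2) * deriv (deriv n1) z =
      n1 z * R1 θ r1 r2 g1 g2 κ1 κ2 m1 m2 z (∫ x, n1 x) + m2 * n2 z - m1 * n1 z ∧
    -(ε ^ 2) * deriv (deriv n2) z =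
      n2 z * R2 θ r1 r2 g1 g2 κ1 κ2 m1 m2 z (∫ x, n2 x) + m1 * n1 z - m2 * n2 z

lemma cd2 {f : ℝ → ℝ} (hf : ContDiff ℝ 2 f) :
    Differentiable ℝ f ∧ Differentiable ℝ (deriv f) ∧ Continuous (deriv (deriv f)) := by
  rw [show (2 : WithTop ℕ∞) = 1 + 1 from rfl, contDiff_succ_iff_deriv] at hf
  have h2 := contDiff_one_iff_deriv.mp hf.2.2
  exact ⟨hf.1, h2.1, h2.2⟩


lemma hasDerivAt_cosh_lin (l c s : ℝ) :
    HasDerivAt (fun t => Real.cosh (l * (t - c))) (Real.sinh (l * (s - c)) * l) s := by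
  have h1 : HasDerivAt (fun t : ℝ => l * (t - c)) l s := by
    simpa using ((hasDerivAt_id s).sub_const c).const_mul l
  exact (Real.hasDerivAt_cosh (l * (s - c))).comp s h1

lemma hasDerivAt_sinh_lin (l c s : ℝ) :
    HasDerivAt (fun t => Real.sinh (l * (t - c))) (Real.cosh (l * (s - c)) * l) s := by
  have h1 : HasDerivAt (fun t : ℝ => l * (t - c)) l s := by
    simpa using ((hasDerivAt_id s).sub_const c).const_mul l
  exact (Real.hasDerivAt_sinh (l * (s - c))).comp s h1

lemma maxPrinciple {f f' f'' : ℝ → ℝ} {a b β : ℝ} (hβ : 0 < β)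
    (hf : ∀ s, HasDerivAt f (f' s) s) (hf' : ∀ s, HasDerivAt f' (f'' s) s)
    (hc : Continuous f'')
    (hineq : ∀ s ∈ Icc a b, f'' s ≤ β * f s)
    (hfa : 0 < f a) (hfb : 0 < f b) : ∀ s ∈ Icc a b, 0 ≤ f s := by
  by_contra hcon
  push_neg at hcon
  obtain ⟨s₀, hs₀, hs₀neg⟩ := hcon
  have hab : a ≤ b := hs₀.1.trans hs₀.2
  have hdf : Differentiable ℝ f := fun s => (hf s).differentiableAt
  have hdf' : Differentiable ℝ f' := fun s => (hf' s).differentiableAt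
  obtain ⟨c, hcmem, hcmin⟩ := isCompact_Icc.exists_isMinOn (nonempty_Icc.2 hab)
    hdf.continuous.continuousOn
  have hfc_neg : f c < 0 := lt_of_le_of_lt (hcmin hs₀) hs₀neg
  have hca : c ≠ a := fun h => absurd (h ▸ hfc_neg) (not_lt.2 hfa.le)
  have hcb : c ≠ b := fun h => absurd (h ▸ hfc_neg) (not_lt.2 hfb.le)
  have hcIoo : c ∈ Ioo a b := ⟨lt_of_le_of_ne hcmem.1 (Ne.symm hca), lt_of_le_of_ne hcmem.2 hcb⟩
  have hloc : IsLocalMin f c := hcmin.isLocalMin (Icc_mem_nhds hcIoo.1 hcIoo.2)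
  have hf'c : f' c = 0 := by
    have := hloc.deriv_eq_zero
    rwa [(hf c).deriv] at this
  have hf''c : f'' c < 0 :=
    lt_of_le_of_lt (hineq c hcmem) (by nlinarith)
  -- find δ > 0 with f'' < 0 on ball c δ
  have hev : ∀ᶠ s in nhds c, f'' s < 0 := hc.continuousAt.eventually_lt continuousAt_const hf''c
  obtain ⟨δ, hδpos, hδ⟩ := Metric.eventually_nhds_iff.mp hev
  obtain ⟨t, hct, htble, htb⟩ : ∃ t, c < t ∧ t ≤ c + δ / 2 ∧ t ≤ b := by
    refine ⟨c + min (δ / 2) (b - c), ?_, ?_, ?_⟩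
    · have : 0 < min (δ / 2) (b - c) := lt_min (by linarith) (by linarith [hcIoo.2])
      linarith
    · have := min_le_left (δ / 2) (b - c); linarith
    · have := min_le_right (δ / 2) (b - c); linarith
  have hsub : Icc c t ⊆ Metric.ball c δ := by
    intro s hs
    simp only [Metric.mem_ball, Real.dist_eq, abs_lt]
    exact ⟨by linarith [hs.1], by linarith [hs.2]⟩
  have hf''neg : ∀ s ∈ Icc c t, f'' s < 0 := fun s hs => hδ (by
    have := hsub hs; simpa [Real.dist_eq] using this)
  -- f' strictly decreasing on [c,t]
  have hanti' : StrictAntiOn f' (Icc c t) := by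
    apply strictAntiOn_of_deriv_neg (convex_Icc c t) hdf'.continuous.continuousOn
    intro s hs
    rw [interior_Icc] at hs
    rw [(hf' s).deriv]
    exact hf''neg s (Ioo_subset_Icc_self hs)
  have hf'neg : ∀ s ∈ Ioo c t, f' s < 0 := by
    intro s hs
    have := hanti' (left_mem_Icc.2 hct.le) ⟨hs.1.le, hs.2.le⟩ hs.1
    rwa [hf'c] at this
  have hanti : StrictAntiOn f (Icc c t) := by
    apply strictAntiOn_of_deriv_neg (convex_Icc c t) hdf.continuous.continuousOn
    intro s hs
    rw [interior_Icc] at hs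
    rw [(hf s).deriv]
    exact hf'neg s hs
  have : f t < f c := hanti (left_mem_Icc.2 hct.le) (right_mem_Icc.2 hct.le) hct
  exact absurd (hcmin ⟨hcIoo.1.le.trans hct.le, htb⟩) (not_le.2 this)

lemma arith_core {X Y Z Ψ p q δ r0 : ℝ} (hY : 0 < Y) (hXY : Y < X) (hΨ : 1 ≤ Ψ)
    (hδ : 0 < δ) (hp : 0 < p) (hq : δ ≤ q) (hpr : p ≤ r0 * δ) (hr0 : 0 < r0)
    (h1 : X - Y ≤ Z * p) (h2 : Z * q < Y * Ψ) : X ≤ (1 + r0 * Ψ) * Y := by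
  have hq0 : 0 < q := lt_of_lt_of_le hδ hq
  have s1 : (X - Y) * q ≤ Z * p * q := mul_le_mul_of_nonneg_right h1 hq0.le
  have s2 : Z * q * p < Y * Ψ * p := mul_lt_mul_of_pos_right h2 hp
  have s3 : (X - Y) * δ ≤ (X - Y) * q := mul_le_mul_of_nonneg_left hq (by linarith)
  have s4 : Y * Ψ * p ≤ Y * Ψ * (r0 * δ) :=
    mul_le_mul_of_nonneg_left hpr (by nlinarith)
  have s5 : (X - Y) * δ < (Y * Ψ * r0) * δ := by nlinarith [s1, s2, s3, s4]
  have := lt_of_mul_lt_mul_right s5 hδ.le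
  linarith


/-- Abstract slope/Harnack lemma. -/
lemma slope_harnack {h g ψ : ℝ → ℝ} {a b δ Ψ r0 : ℝ} (hδ : 0 < δ) (hΨ1 : 1 ≤ Ψ)
    (hψ1 : ∀ s, 1 ≤ ψ s)
    (hψΨ : ∀ s ∈ Icc a b, ψ s ^ 2 ≤ Ψ)
    (hh : ∀ s, HasDerivAt h (g s / ψ s ^ 2) s)
    (hganti : AntitoneOn g (Icc a b))
    (hhpos : ∀ s ∈ Icc a b, 0 < h s)
    (hr : (b - a) / δ ≤ r0)
    {x y : ℝ} (hx : x ∈ Icc (a + δ) (b - δ)) (hy : y ∈ Icc (a + δ) (b - δ)) :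
    h x ≤ (1 + r0 * Ψ) * h y := by
  obtain ⟨hx1, hx2⟩ := hx
  obtain ⟨hy1, hy2⟩ := hy
  have hax : a < x := by linarith
  have hxb : x < b := by linarith
  have hay : a < y := by linarith
  have hyb : y < b := by linarith
  have hab : a < b := by linarith
  have hxI : x ∈ Icc a b := ⟨hax.le, hxb.le⟩
  have hyI : y ∈ Icc a b := ⟨hay.le, hyb.le⟩
  have hhx := hhpos x hxI
  have hhy := hhpos y hyI
  have hr0pos : 0 < r0 := lt_of_lt_of_le (div_pos (by linarith) hδ) hr
  have hba_r0 : b - a ≤ r0 * δ := (div_le_iff₀ hδ).mp hr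
  have hhcont : ContinuousOn h (Icc a b) :=
    fun s _ => ((hh s).differentiableAt).continuousAt.continuousWithinAt
  have hψpos : ∀ s, (0:ℝ) < ψ s ^ 2 := fun s => by nlinarith [hψ1 s]
  by_cases hcase : h x ≤ h y
  · nlinarith [mul_nonneg (mul_nonneg hr0pos.le (by linarith : (0:ℝ) ≤ Ψ)) hhy.le]
  push_neg at hcase
  rcases lt_trichotomy x y with hlt | heq | hgt
  · -- x < y : use right endpoint b
    obtain ⟨t₁, ht₁, hs₁⟩ := exists_hasDerivAt_eq_slope h (fun s => g s / ψ s ^ 2) hlt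
      (hhcont.mono (Icc_subset_Icc hax.le hyb.le)) (fun s _ => hh s)
    obtain ⟨t₂, ht₂, hs₂⟩ := exists_hasDerivAt_eq_slope h (fun s => g s / ψ s ^ 2) hyb
      (hhcont.mono (Icc_subset_Icc hay.le le_rfl)) (fun s _ => hh s)
    have ht₁I : t₁ ∈ Icc a b := ⟨by linarith [ht₁.1], by linarith [ht₁.2]⟩
    have ht₂I : t₂ ∈ Icc a b := ⟨by linarith [ht₂.1], by linarith [ht₂.2]⟩
    obtain ⟨S, hSdef⟩ : ∃ S, (h y - h x) / (y - x) = S := ⟨_, rfl⟩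
    obtain ⟨Q, hQdef⟩ : ∃ Q, g t₂ / ψ t₂ ^ 2 = Q := ⟨_, rfl⟩
    rw [hSdef] at hs₁
    rw [hQdef] at hs₂
    have hSyx : S * (y - x) = h y - h x := by
      rw [← hSdef, div_mul_cancel₀ _ (by linarith : y - x ≠ 0)]
    have hSneg : S < 0 := by
      rw [← hSdef]; exact div_neg_of_neg_of_pos (by linarith) (by linarith)
    have hgt₁ : g t₁ = S * ψ t₁ ^ 2 := (div_eq_iff (ne_of_gt (hψpos t₁))).mp hs₁
    have hgt₁le : g t₁ ≤ S := by
      rw [hgt₁]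
      have h1ψ : (1:ℝ) ≤ ψ t₁ ^ 2 := by nlinarith [hψ1 t₁]
      have := mul_le_mul_of_nonpos_left h1ψ hSneg.le
      linarith
    have hgt₂le : g t₂ ≤ S := le_trans (hganti ht₁I ht₂I (by linarith [ht₁.2, ht₂.1])) hgt₁le
    have hQψ : Q * ψ t₂ ^ 2 = g t₂ := by
      rw [← hQdef, div_mul_cancel₀ _ (ne_of_gt (hψpos t₂))]
    have hQneg : Q < 0 := by
      rw [← hQdef]; exact div_neg_of_neg_of_pos (by linarith) (hψpos t₂)
    have hbpos : 0 < h b := hhpos b (right_mem_Icc.2 hab.le)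
    have hhb : h b - h y = Q * (b - y) := (div_eq_iff (by linarith : b - y ≠ 0)).mp hs₂.symm
    -- hypotheses of arith_core with Z := -(Q * Ψ), p := y - x, q := b - y
    have hQΨ : Q * Ψ ≤ S := by
      have := mul_le_mul_of_nonpos_left (hψΨ t₂ ht₂I) hQneg.le
      linarith
    have h1 : h x - h y ≤ -(Q * Ψ) * (y - x) := by
      have := mul_le_mul_of_nonneg_right hQΨ (by linarith : (0:ℝ) ≤ y - x)
      linarith [hSyx]
    have h2' : -h y < Q * (b - y) := by linarith
    have h2 : -(Q * Ψ) * (b - y) < h y * Ψ := by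
      have := mul_lt_mul_of_pos_right h2' (by linarith : (0:ℝ) < Ψ)
      linarith [this]
    exact arith_core hhy hcase hΨ1 hδ (by linarith : (0:ℝ) < y - x)
      (by linarith : δ ≤ b - y) (by linarith : y - x ≤ r0 * δ) hr0pos h1 h2
  · exfalso; rw [heq] at hcase; exact lt_irrefl _ hcase
  · -- y < x : use left endpoint a
    obtain ⟨t₁, ht₁, hs₁⟩ := exists_hasDerivAt_eq_slope h (fun s => g s / ψ s ^ 2) hgt
      (hhcont.mono (Icc_subset_Icc hay.le hxb.le)) (fun s _ => hh s)
    obtain ⟨t₂, ht₂, hs₂⟩ := exists_hasDerivAt_eq_slope h (fun s => g s / ψ s ^ 2) hay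
      (hhcont.mono (Icc_subset_Icc le_rfl hyb.le)) (fun s _ => hh s)
    have ht₁I : t₁ ∈ Icc a b := ⟨by linarith [ht₁.1], by linarith [ht₁.2]⟩
    have ht₂I : t₂ ∈ Icc a b := ⟨by linarith [ht₂.1], by linarith [ht₂.2]⟩
    obtain ⟨S, hSdef⟩ : ∃ S, (h x - h y) / (x - y) = S := ⟨_, rfl⟩
    obtain ⟨Q, hQdef⟩ : ∃ Q, g t₂ / ψ t₂ ^ 2 = Q := ⟨_, rfl⟩
    rw [hSdef] at hs₁
    rw [hQdef] at hs₂
    have hSyx : S * (x - y) = h x - h y := by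
      rw [← hSdef, div_mul_cancel₀ _ (by linarith : x - y ≠ 0)]
    have hSpos : 0 < S := by
      rw [← hSdef]; exact div_pos (by linarith) (by linarith)
    have hgt₁ : g t₁ = S * ψ t₁ ^ 2 := (div_eq_iff (ne_of_gt (hψpos t₁))).mp hs₁
    have hgt₁ge : S ≤ g t₁ := by
      rw [hgt₁]
      have h1ψ : (1:ℝ) ≤ ψ t₁ ^ 2 := by nlinarith [hψ1 t₁]
      have := mul_le_mul_of_nonneg_left h1ψ hSpos.le
      linarith
    have hgt₂ge : S ≤ g t₂ := le_trans hgt₁ge (hganti ht₂I ht₁I (by linarith [ht₁.1, ht₂.2]))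
    have hQψ : Q * ψ t₂ ^ 2 = g t₂ := by
      rw [← hQdef, div_mul_cancel₀ _ (ne_of_gt (hψpos t₂))]
    have hQpos : 0 < Q := by
      rw [← hQdef]; exact div_pos (by linarith) (hψpos t₂)
    have hapos : 0 < h a := hhpos a (left_mem_Icc.2 hab.le)
    have hha : h y - h a = Q * (y - a) := (div_eq_iff (by linarith : y - a ≠ 0)).mp hs₂.symm
    -- hypotheses of arith_core with Z := Q * Ψ, p := x - y, q := y - a
    have hQΨ : S ≤ Q * Ψ := by
      have := mul_le_mul_of_nonneg_left (hψΨ t₂ ht₂I) hQpos.le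
      linarith
    have h1 : h x - h y ≤ Q * Ψ * (x - y) := by
      have := mul_le_mul_of_nonneg_right hQΨ (by linarith : (0:ℝ) ≤ x - y)
      linarith [hSyx]
    have h2' : Q * (y - a) < h y := by linarith
    have h2 : Q * Ψ * (y - a) < h y * Ψ := by
      have := mul_lt_mul_of_pos_right h2' (by linarith : (0:ℝ) < Ψ)
      linarith [this]
    exact arith_core hhy hcase hΨ1 hδ (by linarith : (0:ℝ) < x - y)
      (by linarith : δ ≤ y - a) (by linarith : x - y ≤ r0 * δ) hr0pos h1 h2

/-- One-function Harnack inequality on `[a,b]` for `v'' ≤ β v`, `v > 0`. -/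
lemma harnack_one {v v' v'' : ℝ → ℝ} {a b δ β Λ r0 : ℝ}
    (hβ : 0 < β) (hδ : 0 < δ)
    (hv : ∀ s, HasDerivAt v (v' s) s) (hv' : ∀ s, HasDerivAt v' (v'' s) s)
    (hpos : ∀ s ∈ Icc a b, 0 < v s)
    (hineq : ∀ s ∈ Icc a b, v'' s ≤ β * v s)
    (hΛ : Real.sqrt β * (b - a) ≤ Λ) (hr : (b - a) / δ ≤ r0)
    {x y : ℝ} (hx : x ∈ Icc (a + δ) (b - δ)) (hy : y ∈ Icc (a + δ) (b - δ)) :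
    v x ≤ (1 + r0 * Real.cosh Λ ^ 2) * Real.cosh Λ * v y := by
  have hax : a < x := by have := hx.1; linarith
  have hxb : x < b := by have := hx.2; linarith
  have hay : a < y := by have := hy.1; linarith
  have hyb : y < b := by have := hy.2; linarith
  have hab : a < b := by linarith
  have hxI : x ∈ Icc a b := ⟨hax.le, hxb.le⟩
  have hyI : y ∈ Icc a b := ⟨hay.le, hyb.le⟩
  have hl0 : 0 < Real.sqrt β := Real.sqrt_pos.2 hβ
  have hll : Real.sqrt β * Real.sqrt β = β := Real.mul_self_sqrt hβ.le
  have hΦ1 : 1 ≤ Real.cosh Λ := Real.one_le_cosh Λ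
  -- ψ and its derivatives
  have hψd : ∀ s, HasDerivAt (fun t => Real.cosh (Real.sqrt β * (t - a)))
      (Real.sinh (Real.sqrt β * (s - a)) * Real.sqrt β) s :=
    fun s => hasDerivAt_cosh_lin _ a s
  have hψd' : ∀ s, HasDerivAt (fun t => Real.sinh (Real.sqrt β * (t - a)) * Real.sqrt β)
      (β * Real.cosh (Real.sqrt β * (s - a))) s := fun s => by
    have h0 := (hasDerivAt_sinh_lin (Real.sqrt β) a s).mul_const (Real.sqrt β)
    have he : Real.cosh (Real.sqrt β * (s - a)) * Real.sqrt β * Real.sqrt β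
        = β * Real.cosh (Real.sqrt β * (s - a)) := by
      rw [mul_assoc, hll]; ring
    rw [he] at h0
    exact h0
  have hψ1 : ∀ s, 1 ≤ Real.cosh (Real.sqrt β * (s - a)) := fun s => Real.one_le_cosh _
  have hψpos : ∀ s, 0 < Real.cosh (Real.sqrt β * (s - a)) :=
    fun s => lt_of_lt_of_le one_pos (hψ1 s)
  have hψΦ : ∀ s ∈ Icc a b, Real.cosh (Real.sqrt β * (s - a)) ≤ Real.cosh Λ := by
    intro s hs
    refine Real.cosh_le_cosh.2 ?_
    have h1 : |Real.sqrt β * (s - a)| ≤ Real.sqrt β * (b - a) := by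
      rw [abs_of_nonneg (by nlinarith [hs.1])]
      nlinarith [hs.2]
    exact h1.trans (hΛ.trans (le_abs_self Λ))
  have hψΨ : ∀ s ∈ Icc a b, Real.cosh (Real.sqrt β * (s - a)) ^ 2 ≤ Real.cosh Λ ^ 2 := by
    intro s hs
    have := hψΦ s hs
    nlinarith [hψpos s]
  -- g and h
  have hg : ∀ s, HasDerivAt
      (fun s => v' s * Real.cosh (Real.sqrt β * (s - a))
        - v s * (Real.sinh (Real.sqrt β * (s - a)) * Real.sqrt β))
      ((v'' s - β * v s) * Real.cosh (Real.sqrt β * (s - a))) s := fun s => by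
    have h0 := ((hv' s).mul (hψd s)).sub ((hv s).mul (hψd' s))
    exact h0.congr_deriv (by ring)
  have hganti : AntitoneOn (fun s => v' s * Real.cosh (Real.sqrt β * (s - a))
      - v s * (Real.sinh (Real.sqrt β * (s - a)) * Real.sqrt β)) (Icc a b) := by
    apply antitoneOn_of_deriv_nonpos (convex_Icc a b)
      (fun s _ => ((hg s).differentiableAt).continuousAt.continuousWithinAt)
      (fun s _ => ((hg s).differentiableAt).differentiableWithinAt)
    intro s hs
    rw [interior_Icc] at hs
    rw [(hg s).deriv]
    have h1 : v'' s - β * v s ≤ 0 := by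
      have := hineq s (Ioo_subset_Icc_self hs); linarith
    exact mul_nonpos_of_nonpos_of_nonneg h1 (hψpos s).le
  have hh : ∀ s, HasDerivAt (fun s => v s / Real.cosh (Real.sqrt β * (s - a)))
      ((v' s * Real.cosh (Real.sqrt β * (s - a))
        - v s * (Real.sinh (Real.sqrt β * (s - a)) * Real.sqrt β))
        / Real.cosh (Real.sqrt β * (s - a)) ^ 2) s :=
    fun s => (hv s).div (hψd s) (ne_of_gt (hψpos s))
  have hhpos : ∀ s ∈ Icc a b, 0 < v s / Real.cosh (Real.sqrt β * (s - a)) :=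
    fun s hs => div_pos (hpos s hs) (hψpos s)
  have key := slope_harnack hδ (by nlinarith : (1:ℝ) ≤ Real.cosh Λ ^ 2)
    hψ1 hψΨ hh hganti hhpos hr hx hy
  -- convert back to v
  have hψx : Real.cosh (Real.sqrt β * (x - a)) ≤ Real.cosh Λ := hψΦ x hxI
  have hvx : v x = v x / Real.cosh (Real.sqrt β * (x - a)) * Real.cosh (Real.sqrt β * (x - a)) :=
    (div_mul_cancel₀ _ (ne_of_gt (hψpos x))).symm
  have hvy : v y / Real.cosh (Real.sqrt β * (y - a)) ≤ v y := by
    rw [div_le_iff₀ (hψpos y)]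
    nlinarith [hpos y hyI, hψ1 y]
  have hhypos : 0 < v y / Real.cosh (Real.sqrt β * (y - a)) := hhpos y hyI
  have hhxpos : 0 < v x / Real.cosh (Real.sqrt β * (x - a)) := hhpos x hxI
  calc v x = v x / Real.cosh (Real.sqrt β * (x - a)) * Real.cosh (Real.sqrt β * (x - a)) := hvx
    _ ≤ ((1 + r0 * Real.cosh Λ ^ 2) * (v y / Real.cosh (Real.sqrt β * (y - a)))) * Real.cosh Λ := by
        apply mul_le_mul key hψx (hψpos x).le
        nlinarith [hhypos, hδ, hab, div_pos (by linarith : (0:ℝ) < b - a) hδ,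
          lt_of_lt_of_le (div_pos (by linarith : (0:ℝ) < b - a) hδ) hr]
    _ ≤ (1 + r0 * Real.cosh Λ ^ 2) * Real.cosh Λ * v y := by
        have hr0pos : 0 < r0 := lt_of_lt_of_le (div_pos (by linarith) hδ) hr
        have h9 : 0 ≤ (1 + r0 * Real.cosh Λ ^ 2) * Real.cosh Λ := by nlinarith
        nlinarith [mul_le_mul_of_nonneg_left hvy h9, hvy]

/-- Quantitative lower bound at the center for `v'' ≤ β v - γ`. -/
lemma lower_bound {v v' v'' : ℝ → ℝ} {y d β γ : ℝ} (hβ : 0 < β) (hd : 0 < d) (hγ : 0 ≤ γ)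
    (hv : ∀ s, HasDerivAt v (v' s) s) (hv' : ∀ s, HasDerivAt v' (v'' s) s)
    (hc : Continuous v'')
    (hpos : ∀ s ∈ Icc (y - d) (y + d), 0 < v s)
    (hineq : ∀ s ∈ Icc (y - d) (y + d), v'' s ≤ β * v s - γ) :
    γ / β * (1 - 1 / Real.cosh (Real.sqrt β * d)) ≤ v y := by
  set l := Real.sqrt β with hldef
  have hl0 : 0 < l := Real.sqrt_pos.2 hβ
  have hll : l * l = β := Real.mul_self_sqrt hβ.le
  have hcosh1 : (1:ℝ) ≤ Real.cosh (l * d) := Real.one_le_cosh _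
  have hcoshpos : (0:ℝ) < Real.cosh (l * d) := by linarith
  set c₁ := γ / (β * Real.cosh (l * d)) with hc₁def
  have hc₁ : 0 ≤ c₁ := div_nonneg hγ (by positivity)
  have hc₁cosh : c₁ * Real.cosh (l * d) = γ / β := by
    rw [hc₁def]; field_simp
  -- q = v - φ
  have hq : ∀ s, HasDerivAt (fun t => v t - γ / β + c₁ * Real.cosh (l * (t - y)))
      (v' s + c₁ * (Real.sinh (l * (s - y)) * l)) s := fun s =>
    ((hv s).sub_const _).add ((hasDerivAt_cosh_lin l y s).const_mul c₁)
  have hq' : ∀ s, HasDerivAt (fun t => v' t + c₁ * (Real.sinh (l * (t - y)) * l))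
      (v'' s + c₁ * (β * Real.cosh (l * (s - y)))) s := fun s => by
    have h0 := ((hasDerivAt_sinh_lin l y s).mul_const l).const_mul c₁
    have he : c₁ * (Real.cosh (l * (s - y)) * l * l) = c₁ * (β * Real.cosh (l * (s - y))) := by
      rw [mul_assoc, hll]; ring
    rw [he] at h0
    exact (hv' s).add h0
  have hqc : Continuous (fun s => v'' s + c₁ * (β * Real.cosh (l * (s - y)))) := by
    apply hc.add
    have : Continuous (fun s : ℝ => Real.cosh (l * (s - y))) :=
      Real.continuous_cosh.comp (continuous_const.mul (continuous_id.sub continuous_const))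
    fun_prop
  have hqineq : ∀ s ∈ Icc (y - d) (y + d),
      v'' s + c₁ * (β * Real.cosh (l * (s - y)))
        ≤ β * (v s - γ / β + c₁ * Real.cosh (l * (s - y))) := by
    intro s hs
    have h1 := hineq s hs
    have h2 : β * (γ / β) = γ := by field_simp
    nlinarith [h1, h2]
  have hqa : 0 < v (y - d) - γ / β + c₁ * Real.cosh (l * (y - d - y)) := by
    have h1 : l * (y - d - y) = -(l * d) := by ring
    rw [h1, Real.cosh_neg, hc₁cosh]
    have := hpos (y - d) (by constructor <;> linarith)
    linarith
  have hqb : 0 < v (y + d) - γ / β + c₁ * Real.cosh (l * (y + d - y)) := by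
    have h1 : l * (y + d - y) = l * d := by ring
    rw [h1, hc₁cosh]
    have := hpos (y + d) (by constructor <;> linarith)
    linarith
  have hmain := maxPrinciple hβ hq hq' hqc hqineq hqa hqb y
    (by constructor <;> linarith)
  have h0 : l * (y - y) = 0 := by ring
  rw [h0, Real.cosh_zero, mul_one] at hmain
  -- v y ≥ γ/β - c₁, and γ/β - c₁ = γ/β (1 - 1/cosh(l d))
  have hfin : γ / β - c₁ = γ / β * (1 - 1 / Real.cosh (l * d)) := by
    rw [hc₁def]; field_simp
  linarith [hfin ▸ (by linarith [hmain] : γ / β - c₁ ≤ v y)]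

lemma final_combine {n1x n2x n1y n2y CB K1 K2 : ℝ}
    (h1 : 0 < n1x) (h2 : 0 < n2x) (h3 : 0 < n1y) (h4 : 0 < n2y)
    (hCB : 1 ≤ CB) (hK1 : 0 ≤ K1) (hK2 : 0 ≤ K2)
    (hux : n1x + n2x ≤ CB * (n1y + n2y))
    (h21 : n2y ≤ K2 * n1y) (h12 : n1y ≤ K1 * n2y) :
    n1x ≤ CB * (1 + K2 + K1) * n1y ∧ n1x ≤ CB * (1 + K2 + K1) * n2y ∧
    n2x ≤ CB * (1 + K2 + K1) * n1y ∧ n2x ≤ CB * (1 + K2 + K1) * n2y := by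
  have p1 : CB * n2y ≤ CB * (K2 * n1y) := mul_le_mul_of_nonneg_left h21 (by linarith)
  have p2 : CB * n1y ≤ CB * (K1 * n2y) := mul_le_mul_of_nonneg_left h12 (by linarith)
  have q1 : 0 ≤ CB * K1 * n1y := mul_nonneg (mul_nonneg (by linarith) hK1) h3.le
  have q2 : 0 ≤ CB * K2 * n2y := mul_nonneg (mul_nonneg (by linarith) hK2) h4.le
  refine ⟨by nlinarith, by nlinarith, by nlinarith, by nlinarith⟩


lemma negmul {P R A0 : ℝ} (hP : 0 ≤ P) (hR : -A0 ≤ R) : -(P * R) ≤ P * A0 := by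
  have := mul_le_mul_of_nonneg_left hR hP
  nlinarith [this]

lemma deriv_bound1 {D P1 P2 RR A0 m1 m2 e2 : ℝ}
    (heq : e2 * D = -(P1 * RR) - m2 * P2 + m1 * P1)
    (hP1 : 0 < P1) (hP2 : 0 < P2) (hm1 : 0 ≤ m1) (hm2 : 0 ≤ m2)
    (hprod : -(P1 * RR) ≤ P1 * A0) :
    D * e2 ≤ (A0 + m1 + m2) * P1 := by nlinarith [mul_nonneg hm2 hP2.le, mul_nonneg hm2 hP1.le]

lemma deriv_boundu {D1 D2 P1 P2 R1v R2v A0 m1 m2 e2 : ℝ}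
    (heq1 : e2 * D1 = -(P1 * R1v) - m2 * P2 + m1 * P1)
    (heq2 : e2 * D2 = -(P2 * R2v) - m1 * P1 + m2 * P2)
    (h1 : -(P1 * R1v) ≤ P1 * A0) (h2 : -(P2 * R2v) ≤ P2 * A0)
    (hP1 : 0 < P1) (hP2 : 0 < P2) (hm1 : 0 ≤ m1) (hm2 : 0 ≤ m2) :
    (D1 + D2) * e2 ≤ (A0 + m1 + m2) * (P1 + P2) := by
  nlinarith [mul_nonneg hm1 hP1.le, mul_nonneg hm1 hP2.le,
    mul_nonneg hm2 hP1.le, mul_nonneg hm2 hP2.le]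

lemma deriv_bound_low {D P1 P2 RR A0 m1 m2 w e2 : ℝ}
    (heq : e2 * D = -(P1 * RR) - m2 * P2 + m1 * P1)
    (hprod : -(P1 * RR) ≤ P1 * A0) (hw : w ≤ P2) (hP1 : 0 < P1)
    (hm1 : 0 ≤ m1) (hm2 : 0 ≤ m2) :
    D * e2 ≤ (A0 + m1 + m2) * P1 - m2 * w := by
  nlinarith [mul_le_mul_of_nonneg_left hw hm2, mul_nonneg hm1 hP1.le, mul_nonneg hm2 hP1.le]

lemma deriv_bound2 {D P1 P2 RR A0 m1 m2 e2 : ℝ}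
    (heq : e2 * D = -(P1 * RR) - m1 * P2 + m2 * P1)
    (hP1 : 0 < P1) (hP2 : 0 < P2) (hm1 : 0 ≤ m1) (hm2 : 0 ≤ m2)
    (hprod : -(P1 * RR) ≤ P1 * A0) :
    D * e2 ≤ (A0 + m1 + m2) * P1 := by nlinarith [mul_nonneg hm1 hP2.le, mul_nonneg hm1 hP1.le]

lemma deriv_bound_low2 {D P1 P2 RR A0 m1 m2 w e2 : ℝ}
    (heq : e2 * D = -(P1 * RR) - m1 * P2 + m2 * P1)
    (hprod : -(P1 * RR) ≤ P1 * A0) (hw : w ≤ P2) (hP1 : 0 < P1)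
    (hm1 : 0 ≤ m1) (hm2 : 0 ≤ m2) :
    D * e2 ≤ (A0 + m1 + m2) * P1 - m1 * w := by
  nlinarith [mul_le_mul_of_nonneg_left hw hm1, mul_nonneg hm2 hP1.le, mul_nonneg hm1 hP1.le]

lemma absR_bound {r G g κ Kp mx ρ θ N A0 z c : ℝ}
    (hg : 0 < g) (hgG : g ≤ G) (hκ : 0 < κ) (hκK : κ ≤ Kp)
    (hmx : 0 ≤ mx) (hN0 : 0 ≤ N) (hN2 : N ≤ 2 * mx)
    (hθ : 0 < θ) (hρ : 0 ≤ ρ) (hz : |z| ≤ ρ + 2) (hc : |c| ≤ θ)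
    (hA0 : |r| + G * (ρ + 2 + θ) ^ 2 + 2 * Kp * mx ≤ A0) :
    |r - g * (z + c) ^ 2 - κ * N| ≤ A0 := by
  rw [abs_le] at hz hc ⊢
  have hsq : (z + c) ^ 2 ≤ (ρ + 2 + θ) ^ 2 :=
    sq_le_sq' (by linarith [hz.1, hc.1]) (by linarith [hz.2, hc.2])
  have h1 : 0 ≤ g * (z + c) ^ 2 := mul_nonneg hg.le (sq_nonneg _)
  have h2 : g * (z + c) ^ 2 ≤ G * (ρ + 2 + θ) ^ 2 := by
    nlinarith [sq_nonneg (ρ + 2 + θ)]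
  have h3 : 0 ≤ κ * N := mul_nonneg hκ.le hN0
  have h4 : κ * N ≤ 2 * Kp * mx := by
    nlinarith [mul_le_mul_of_nonneg_left hN2 hκ.le, mul_nonneg (by linarith : (0:ℝ) ≤ Kp - κ) hmx]
  constructor
  · nlinarith [le_abs_self r, neg_abs_le r]
  · nlinarith [le_abs_self r, neg_abs_le r]


/-- Harnack-type inequality, uniform in `ε ∈ (0,1]`, for solutions of `(S_ε)`. -/
theorem harnack_inequality (θ r1 r2 g1 g2 κ1 κ2 m1 m2 : ℝ)
    (hθ : 0 < θ) (hg1 : 0 < g1) (hg2 : 0 < g2) (hκ1 : 0 < κ1) (hκ2 : 0 < κ2)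
    (hm1 : 0 < m1) (hm2 : 0 < m2) :
    ∀ K : Set ℝ, IsCompact K →
      ∃ C : ℝ, 0 < C ∧
        ∀ ε : ℝ, 0 < ε → ε ≤ 1 →
          ∀ n1 n2 : ℝ → ℝ, IsAdmissible n1 n2 → SolvesS θ r1 r2 g1 g2 κ1 κ2 m1 m2 ε n1 n2 →
            (∫ z, n1 z) + (∫ z, n2 z) ≤ 2 * max r1 r2 →
            ∀ x ∈ K, ∀ y ∈ K, |x - y| ≤ ε →
              n1 x ≤ C * n1 y ∧ n1 x ≤ C * n2 y ∧
              n2 x ≤ C * n1 y ∧ n2 x ≤ C * n2 y := by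
  intro K hK
  obtain ⟨ρ₀, hρ₀⟩ := hK.isBounded.subset_closedBall 0
  obtain ⟨ρ, hρdef⟩ : ∃ t, t = max ρ₀ 0 := ⟨_, rfl⟩
  have hρ0 : 0 ≤ ρ := by rw [hρdef]; exact le_max_right _ _
  have hKρ : ∀ w ∈ K, |w| ≤ ρ := by
    intro w hw
    have h := hρ₀ hw
    rw [Metric.mem_closedBall, Real.dist_eq, sub_zero] at h
    rw [hρdef]; exact h.trans (le_max_left _ _)
  obtain ⟨mx, hmxdef⟩ : ∃ t, t = max (max r1 r2) 0 := ⟨_, rfl⟩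
  have hmx0 : 0 ≤ mx := by rw [hmxdef]; exact le_max_right _ _
  obtain ⟨A0, hA0def⟩ : ∃ t, t = |r1| + |r2| + (g1 + g2) * (ρ + 2 + θ) ^ 2 + 2 * (κ1 + κ2) * mx + 1 := ⟨_, rfl⟩
  have hA01 : 1 ≤ A0 := by
    have e1 := abs_nonneg r1
    have e2 := abs_nonneg r2
    have e3 : 0 ≤ (g1 + g2) * (ρ + 2 + θ) ^ 2 := mul_nonneg (by linarith) (sq_nonneg _)
    have e4 : 0 ≤ 2 * (κ1 + κ2) * mx := mul_nonneg (by linarith) hmx0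
    rw [hA0def]; linarith
  obtain ⟨A, hAdef⟩ : ∃ t, t = A0 + m1 + m2 := ⟨_, rfl⟩
  have hApos : 0 < A := by rw [hAdef]; linarith
  have hsA : 0 < Real.sqrt A := Real.sqrt_pos.2 hApos
  obtain ⟨Λ, hΛdef⟩ : ∃ t, t = 4 * Real.sqrt A := ⟨_, rfl⟩
  have hco1 : 1 ≤ Real.cosh Λ := Real.one_le_cosh _
  obtain ⟨CB, hCBdef⟩ : ∃ t, t = (1 + 4 * Real.cosh Λ ^ 2) * Real.cosh Λ := ⟨_, rfl⟩
  have hCB1 : 1 ≤ CB := by rw [hCBdef]; nlinarith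
  have hCBpos : 0 < CB := by linarith
  have hcosh1 : 1 < Real.cosh (Real.sqrt A) := Real.one_lt_cosh.2 (ne_of_gt hsA)
  obtain ⟨c0, hc0def⟩ : ∃ t, t = (1 - 1 / Real.cosh (Real.sqrt A)) / A := ⟨_, rfl⟩
  have hc0pos : 0 < c0 := by
    rw [hc0def]
    apply div_pos _ hApos
    have h5 : 1 / Real.cosh (Real.sqrt A) < 1 := by
      rw [div_lt_one (by linarith)]; exact hcosh1
    linarith
  obtain ⟨K1, hK1def⟩ : ∃ t, t = CB / (c0 * m1) := ⟨_, rfl⟩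
  obtain ⟨K2, hK2def⟩ : ∃ t, t = CB / (c0 * m2) := ⟨_, rfl⟩
  have hK1pos : 0 < K1 := by rw [hK1def]; exact div_pos hCBpos (mul_pos hc0pos hm1)
  have hK2pos : 0 < K2 := by rw [hK2def]; exact div_pos hCBpos (mul_pos hc0pos hm2)
  refine ⟨CB * (1 + K2 + K1), mul_pos hCBpos (by linarith), ?_⟩
  intro ε hε hε1 n1 n2 hadm hsol hsum x hxK y hyK hxy
  obtain ⟨hp1, hp2, hC1, hC2, hi1, hi2, -, -, -, -, -, -⟩ := hadm
  obtain ⟨hd1, hd1', hc1''⟩ := cd2 hC1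
  obtain ⟨hd2, hd2', hc2''⟩ := cd2 hC2
  have hv1 : ∀ s, HasDerivAt n1 (deriv n1 s) s := fun s => (hd1 s).hasDerivAt
  have hv1' : ∀ s, HasDerivAt (deriv n1) (deriv (deriv n1) s) s := fun s => (hd1' s).hasDerivAt
  have hv2 : ∀ s, HasDerivAt n2 (deriv n2 s) s := fun s => (hd2 s).hasDerivAt
  have hv2' : ∀ s, HasDerivAt (deriv n2) (deriv (deriv n2) s) s := fun s => (hd2' s).hasDerivAt
  have hN10 : 0 ≤ ∫ z, n1 z := integral_nonneg fun z => (hp1 z).le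
  have hN20 : 0 ≤ ∫ z, n2 z := integral_nonneg fun z => (hp2 z).le
  have hmaxmx : max r1 r2 ≤ mx := by rw [hmxdef]; exact le_max_left _ _
  have hN1le : (∫ z, n1 z) ≤ 2 * mx := by linarith
  have hN2le : (∫ z, n2 z) ≤ 2 * mx := by linarith
  have hε2 : 0 < ε ^ 2 := by positivity
  obtain ⟨β, hβdef⟩ : ∃ t, t = A / ε ^ 2 := ⟨_, rfl⟩
  have hβpos : 0 < β := by rw [hβdef]; exact div_pos hApos hε2
  have hsqβ : Real.sqrt β = Real.sqrt A / ε := by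
    rw [hβdef, Real.sqrt_div hApos.le, Real.sqrt_sq hε.le]
  -- window facts
  have hyρ := hKρ y hyK
  have habs : ∀ z ∈ Icc (y - 2*ε) (y + 2*ε), |z| ≤ ρ + 2 := by
    intro z hz
    rw [abs_le] at hyρ ⊢
    exact ⟨by linarith [hz.1, hyρ.1], by linarith [hz.2, hyρ.2]⟩
  have hR1b : ∀ z ∈ Icc (y - 2*ε) (y + 2*ε),
      |R1 θ r1 r2 g1 g2 κ1 κ2 m1 m2 z (∫ x, n1 x)| ≤ A0 := by
    intro z hz
    rw [R1]
    refine absR_bound (G := g1 + g2) (Kp := κ1 + κ2) hg1 (by linarith) hκ1 (by linarith) hmx0 hN10 hN1le hθ hρ0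
      (habs z hz) (by rw [abs_of_pos hθ]) ?_
    rw [hA0def]
    have := abs_nonneg r2
    linarith
  have hR2b : ∀ z ∈ Icc (y - 2*ε) (y + 2*ε),
      |R2 θ r1 r2 g1 g2 κ1 κ2 m1 m2 z (∫ x, n2 x)| ≤ A0 := by
    intro z hz
    rw [R2, show ∀ w : ℝ, w - θ = w + (-θ) from fun w => by ring]
    refine absR_bound (G := g1 + g2) (Kp := κ1 + κ2) hg2 (by linarith) hκ2 (by linarith) hmx0 hN20 hN2le hθ hρ0
      (habs z hz) (by rw [abs_neg, abs_of_pos hθ]) ?_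
    rw [hA0def]
    have := abs_nonneg r1
    linarith
  -- equations rearranged
  have heq1 : ∀ z, ε ^ 2 * deriv (deriv n1) z =
      -(n1 z * R1 θ r1 r2 g1 g2 κ1 κ2 m1 m2 z (∫ x, n1 x)) - m2 * n2 z + m1 * n1 z := by
    intro z; linarith [(hsol z).1]
  have heq2 : ∀ z, ε ^ 2 * deriv (deriv n2) z =
      -(n2 z * R2 θ r1 r2 g1 g2 κ1 κ2 m1 m2 z (∫ x, n2 x)) - m1 * n1 z + m2 * n2 z := by
    intro z; linarith [(hsol z).2]
  have hAe : A = A0 + m1 + m2 := hAdef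
  have hprod1 : ∀ z ∈ Icc (y - 2*ε) (y + 2*ε),
      -(n1 z * R1 θ r1 r2 g1 g2 κ1 κ2 m1 m2 z (∫ x, n1 x)) ≤ n1 z * A0 := by
    intro z hz
    have hRz := hR1b z hz
    rw [abs_le] at hRz
    exact negmul (hp1 z).le hRz.1
  have hprod2 : ∀ z ∈ Icc (y - 2*ε) (y + 2*ε),
      -(n2 z * R2 θ r1 r2 g1 g2 κ1 κ2 m1 m2 z (∫ x, n2 x)) ≤ n2 z * A0 := by
    intro z hz
    have hRz := hR2b z hz
    rw [abs_le] at hRz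
    exact negmul (hp2 z).le hRz.1
  -- second derivative bounds
  have hb1 : ∀ z ∈ Icc (y - 2*ε) (y + 2*ε), deriv (deriv n1) z ≤ β * n1 z := by
    intro z hz
    rw [hβdef, div_mul_eq_mul_div, le_div_iff₀ hε2, hAe]
    exact deriv_bound1 (heq1 z) (hp1 z) (hp2 z) hm1.le hm2.le (hprod1 z hz)
  have hb2 : ∀ z ∈ Icc (y - 2*ε) (y + 2*ε), deriv (deriv n2) z ≤ β * n2 z := by
    intro z hz
    rw [hβdef, div_mul_eq_mul_div, le_div_iff₀ hε2, hAe]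
    exact deriv_bound2 (heq2 z) (hp2 z) (hp1 z) hm1.le hm2.le (hprod2 z hz)
  have hbu : ∀ z ∈ Icc (y - 2*ε) (y + 2*ε),
      deriv (deriv n1) z + deriv (deriv n2) z ≤ β * (n1 z + n2 z) := by
    intro z hz
    rw [hβdef, div_mul_eq_mul_div, le_div_iff₀ hε2, hAe]
    exact deriv_boundu (heq1 z) (heq2 z) (hprod1 z hz) (hprod2 z hz)
      (hp1 z) (hp2 z) hm1.le hm2.le
  -- Harnack applications on the window [y-2ε, y+2ε] with margin ε
  have hΛarg : Real.sqrt β * (y + 2*ε - (y - 2*ε)) ≤ Λ := by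
    rw [hsqβ, hΛdef]
    have h10 : y + 2*ε - (y - 2*ε) = 4 * ε := by ring
    rw [h10]
    have h11 : Real.sqrt A / ε * (4 * ε) = 4 * Real.sqrt A := by
      field_simp
    rw [h11]
  have hr4 : (y + 2*ε - (y - 2*ε)) / ε ≤ 4 := by
    have h10 : y + 2*ε - (y - 2*ε) = 4 * ε := by ring
    rw [h10, mul_div_assoc, div_self (ne_of_gt hε), mul_one]
  have hxmem : x ∈ Icc (y - 2*ε + ε) (y + 2*ε - ε) := by
    rw [abs_le] at hxy
    exact ⟨by linarith [hxy.1], by linarith [hxy.2]⟩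
  have hymem : y ∈ Icc (y - 2*ε + ε) (y + 2*ε - ε) := ⟨by linarith, by linarith⟩
  -- (1) Harnack for u = n1 + n2
  have hux : n1 x + n2 x ≤ CB * (n1 y + n2 y) := by
    have h12 := harnack_one (v := fun z => n1 z + n2 z)
      (v' := fun z => deriv n1 z + deriv n2 z)
      (v'' := fun z => deriv (deriv n1) z + deriv (deriv n2) z)
      hβpos hε (fun s => (hv1 s).add (hv2 s)) (fun s => (hv1' s).add (hv2' s))
      (fun s _ => add_pos (hp1 s) (hp2 s)) hbu hΛarg hr4 hxmem hymem
    rw [hCBdef]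
    simpa using h12
  -- (2) Harnack for n1 and n2 : for s in [y-ε, y+ε]
  have hhar1 : ∀ s ∈ Icc (y - ε) (y + ε), n1 y ≤ CB * n1 s := by
    intro s hs
    have hsmem : s ∈ Icc (y - 2*ε + ε) (y + 2*ε - ε) :=
      ⟨by linarith [hs.1], by linarith [hs.2]⟩
    have h12 := harnack_one hβpos hε hv1 hv1' (fun s _ => hp1 s) hb1 hΛarg hr4 hymem hsmem
    rw [hCBdef]
    exact h12
  have hhar2 : ∀ s ∈ Icc (y - ε) (y + ε), n2 y ≤ CB * n2 s := by
    intro s hs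
    have hsmem : s ∈ Icc (y - 2*ε + ε) (y + 2*ε - ε) :=
      ⟨by linarith [hs.1], by linarith [hs.2]⟩
    have h12 := harnack_one hβpos hε hv2 hv2' (fun s _ => hp2 s) hb2 hΛarg hr4 hymem hsmem
    rw [hCBdef]
    exact h12
  -- (3) lower bounds via coupling
  have hsqβε : Real.sqrt β * ε = Real.sqrt A := by
    rw [hsqβ, div_mul_cancel₀ _ (ne_of_gt hε)]
  have hsub : Icc (y - ε) (y + ε) ⊆ Icc (y - 2*ε) (y + 2*ε) :=
    Icc_subset_Icc (by linarith) (by linarith)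
  have h21 : n2 y ≤ K2 * n1 y := by
    have hlow := lower_bound (v := n1) (v' := deriv n1) (v'' := deriv (deriv n1)) (y := y) (d := ε)
      (γ := m2 * (n2 y / CB) / ε ^ 2) hβpos hε
      (div_nonneg (mul_nonneg hm2.le (div_nonneg (hp2 y).le hCBpos.le)) hε2.le) hv1 hv1' hc1'' (fun s hs => hp1 s) ?_
    · rw [hsqβε] at hlow
      have hgb : m2 * (n2 y / CB) / ε ^ 2 / β = m2 * (n2 y / CB) / A := by
        rw [hβdef]; field_simp
      rw [hgb] at hlow
      have hlow2 : c0 * (m2 * (n2 y / CB)) ≤ n1 y := by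
        have hco : m2 * (n2 y / CB) / A * (1 - 1 / Real.cosh (Real.sqrt A))
            = c0 * (m2 * (n2 y / CB)) := by
          rw [hc0def]; ring
        linarith [hco ▸ hlow]
      rw [hK2def, div_mul_eq_mul_div, le_div_iff₀ (mul_pos hc0pos hm2)]
      have h13 := mul_le_mul_of_nonneg_right hlow2 hCBpos.le
      have h14 : c0 * (m2 * (n2 y / CB)) * CB = n2 y * (c0 * m2) := by
        field_simp [ne_of_gt hCBpos]
      linarith [h14 ▸ h13]
    · intro s hs
      have hsw := hsub hs
      have h6 := hprod1 s hsw
      have h7 := heq1 s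
      have h15 : n2 y / CB ≤ n2 s := by
        rw [div_le_iff₀ hCBpos]
        linarith [hhar2 s hs]
      have h16 : deriv (deriv n1) s * ε ^ 2 ≤ A * n1 s - m2 * (n2 y / CB) := by
        rw [hAe]
        exact deriv_bound_low (heq1 s) (hprod1 s hsw) h15 (hp1 s) hm1.le hm2.le
      have h17 : β * n1 s - m2 * (n2 y / CB) / ε ^ 2
          = (A * n1 s - m2 * (n2 y / CB)) / ε ^ 2 := by
        rw [hβdef]; field_simp [ne_of_gt hε2]
      rw [h17, le_div_iff₀ hε2]
      linarith
  have h12' : n1 y ≤ K1 * n2 y := by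
    have hlow := lower_bound (v := n2) (v' := deriv n2) (v'' := deriv (deriv n2)) (y := y) (d := ε)
      (γ := m1 * (n1 y / CB) / ε ^ 2) hβpos hε
      (div_nonneg (mul_nonneg hm1.le (div_nonneg (hp1 y).le hCBpos.le)) hε2.le) hv2 hv2' hc2'' (fun s hs => hp2 s) ?_
    · rw [hsqβε] at hlow
      have hgb : m1 * (n1 y / CB) / ε ^ 2 / β = m1 * (n1 y / CB) / A := by
        rw [hβdef]; field_simp
      rw [hgb] at hlow
      have hlow2 : c0 * (m1 * (n1 y / CB)) ≤ n2 y := by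
        have hco : m1 * (n1 y / CB) / A * (1 - 1 / Real.cosh (Real.sqrt A))
            = c0 * (m1 * (n1 y / CB)) := by
          rw [hc0def]; ring
        linarith [hco ▸ hlow]
      rw [hK1def, div_mul_eq_mul_div, le_div_iff₀ (mul_pos hc0pos hm1)]
      have h13 := mul_le_mul_of_nonneg_right hlow2 hCBpos.le
      have h14 : c0 * (m1 * (n1 y / CB)) * CB = n1 y * (c0 * m1) := by
        field_simp [ne_of_gt hCBpos]
      linarith [h14 ▸ h13]
    · intro s hs
      have hsw := hsub hs
      have h6 := hprod2 s hsw
      have h7 := heq2 s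
      have h15 : n1 y / CB ≤ n1 s := by
        rw [div_le_iff₀ hCBpos]
        linarith [hhar1 s hs]
      have h16 : deriv (deriv n2) s * ε ^ 2 ≤ A * n2 s - m1 * (n1 y / CB) := by
        rw [hAe]
        exact deriv_bound_low2 (heq2 s) (hprod2 s hsw) h15 (hp2 s) hm1.le hm2.le
      have h17 : β * n2 s - m1 * (n1 y / CB) / ε ^ 2
          = (A * n2 s - m1 * (n1 y / CB)) / ε ^ 2 := by
        rw [hβdef]; field_simp [ne_of_gt hε2]
      rw [h17, le_div_iff₀ hε2]
      linarith
  exact final_combine (hp1 x) (hp2 x) (hp1 y) (hp2 y) hCB1 hK1pos.le hK2pos.le hux h21 h12'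
end

section
/- Assume m_1 > 0, m_2 > 0 and max(r_1 − m_1, r_2 − m_2) > 0. For every η > 0 there exists R > 0, depending only on η and on the parameters, such that for every ε ∈ (0,1] and every admissible solution (n_1, n_2) of the system (S_ε): ∫_{|z| > R} n_i(z) dz < η for i = 1, 2. -/
set_option maxHeartbeats 1000000


open Real Set Filter MeasureTheory

private lemma integral_deriv2_eq_zero (f : ℝ → ℝ) (hf : ContDiff ℝ 2 f)
    (hint : Integrable (deriv (deriv f)))
    (ht : Tendsto (deriv f) (cocompact ℝ) (nhds 0)) :
    ∫ z, deriv (deriv f) z = 0 := by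
  have hf' : ContDiff ℝ (1 + 1) f := by norm_num; exact hf
  have hdf : ContDiff ℝ 1 (deriv f) := (contDiff_succ_iff_deriv.mp hf').2.2
  have hdiff : ∀ x, HasDerivAt (deriv f) (deriv (deriv f) x) x := fun x =>
    ((hdf.differentiable one_ne_zero) x).hasDerivAt
  rw [cocompact_eq_atBot_atTop, tendsto_sup] at ht
  have h1 := integral_Ioi_of_hasDerivAt_of_tendsto' (a := 0) (fun x _ => hdiff x)
    hint.integrableOn ht.2
  have h2 := integral_Iic_of_hasDerivAt_of_tendsto' (a := 0) (fun x _ => hdiff x)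
    hint.integrableOn ht.1
  rw [← intervalIntegral.integral_Iic_add_Ioi (b := 0) hint.integrableOn hint.integrableOn, h1, h2]
  ring

private lemma sq_mul_integrable {n : ℝ → ℝ} (c : ℝ) (hcont : Continuous n)
    (hnn : ∀ z, 0 ≤ n z) (hn : Integrable n) (hz : Integrable (fun z => z ^ 2 * n z)) :
    Integrable (fun z => (z + c) ^ 2 * n z) := by
  refine ((hz.const_mul 2).add (hn.const_mul (2 * c ^ 2))).mono' ?_ ?_
  · exact (Continuous.mul (by continuity) hcont).aestronglyMeasurable
  · filter_upwards with z
    simp only [Pi.add_apply]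
    have h1 : 0 ≤ (z + c) ^ 2 * n z := mul_nonneg (sq_nonneg _) (hnn z)
    rw [Real.norm_eq_abs, abs_of_nonneg h1]
    nlinarith [mul_nonneg (sq_nonneg (z - c)) (hnn z)]

private lemma key_identity (n m : ℝ → ℝ) (r g κ a b c ε : ℝ) (hε : ε ≠ 0)
    (hcn : ContDiff ℝ 2 n) (hnn : ∀ z, 0 ≤ n z)
    (hn : Integrable n) (hz : Integrable (fun z => z ^ 2 * n z))
    (hm : Integrable m)
    (ht : Tendsto (deriv n) (cocompact ℝ) (nhds 0))
    (heq : ∀ z, -(ε ^ 2) * deriv (deriv n) z =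
      n z * (r - g * (z + c) ^ 2 - κ * (∫ x, n x)) + b * m z - a * n z) :
    g * (∫ z, (z + c) ^ 2 * n z) =
      (r - a - κ * (∫ x, n x)) * (∫ x, n x) + b * (∫ x, m x) := by
  have hne : (-(ε ^ 2) : ℝ) ≠ 0 := neg_ne_zero.mpr (pow_ne_zero 2 hε)
  set N := ∫ x, n x with hN
  have hP : Integrable (fun z => (z + c) ^ 2 * n z) :=
    sq_mul_integrable c hcn.continuous hnn hn hz
  have hF : Integrable (fun z => (r - a - κ * N) * n z - g * ((z + c) ^ 2 * n z) + b * m z) :=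
    ((hn.const_mul _).sub (hP.const_mul _)).add (hm.const_mul _)
  have hA : ∀ z, (r - a - κ * N) * n z - g * ((z + c) ^ 2 * n z) + b * m z
      = -(ε ^ 2) * deriv (deriv n) z := fun z => by
    linear_combination -(heq z)
  have hd2 : deriv (deriv n) = fun z =>
      (-(ε ^ 2))⁻¹ * ((r - a - κ * N) * n z - g * ((z + c) ^ 2 * n z) + b * m z) := by
    funext z
    rw [hA z, ← mul_assoc, inv_mul_cancel₀ hne, one_mul]
  have hintd2 : Integrable (deriv (deriv n)) := by
    rw [hd2]; exact hF.const_mul _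
  have hzero : ∫ z, deriv (deriv n) z = 0 := integral_deriv2_eq_zero n hcn hintd2 ht
  have hAint : ∫ z, ((r - a - κ * N) * n z - g * ((z + c) ^ 2 * n z) + b * m z) = 0 := by
    rw [show (fun z => (r - a - κ * N) * n z - g * ((z + c) ^ 2 * n z) + b * m z)
        = fun z => -(ε ^ 2) * deriv (deriv n) z from funext hA]
    rw [integral_const_mul, hzero, mul_zero]
  rw [integral_add (f := fun z => (r - a - κ * N) * n z - g * ((z + c) ^ 2 * n z))
        (g := fun z => b * m z)
        (by exact (hn.const_mul _).sub (hP.const_mul _)) (hm.const_mul _),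
      integral_sub (f := fun z => (r - a - κ * N) * n z)
        (g := fun z => g * ((z + c) ^ 2 * n z))
        (by exact hn.const_mul _) (by exact hP.const_mul _),
      integral_const_mul, integral_const_mul, integral_const_mul] at hAint
  linarith [hAint]

private lemma tail_bound (f : ℝ → ℝ) (hnn : ∀ z, 0 ≤ f z)
    (hint : Integrable f) (hz : Integrable (fun z => z ^ 2 * f z))
    (R : ℝ) (hR : 0 < R) :
    (∫ z in {z : ℝ | R < |z|}, f z) ≤ (∫ z, z ^ 2 * f z) / R ^ 2 := by
  have hR2 : (0 : ℝ) < R ^ 2 := by positivity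
  have hs : MeasurableSet {z : ℝ | R < |z|} :=
    (isOpen_lt continuous_const continuous_abs).measurableSet
  have hmono : (∫ z in {z : ℝ | R < |z|}, f z)
      ≤ ∫ z in {z : ℝ | R < |z|}, (R ^ 2)⁻¹ * (z ^ 2 * f z) := by
    refine setIntegral_mono_on hint.integrableOn ((hz.const_mul _).integrableOn) hs ?_
    intro z hz'
    have h0 : R ≤ |z| := le_of_lt hz'
    have h1 : R ^ 2 ≤ z ^ 2 := by nlinarith [abs_nonneg z, sq_abs z]
    calc f z = (R ^ 2)⁻¹ * (R ^ 2 * f z) := by field_simp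
      _ ≤ (R ^ 2)⁻¹ * (z ^ 2 * f z) := by
          exact mul_le_mul_of_nonneg_left (mul_le_mul_of_nonneg_right h1 (hnn z))
            (by positivity)
  have h2 : (∫ z in {z : ℝ | R < |z|}, (R ^ 2)⁻¹ * (z ^ 2 * f z))
      = (R ^ 2)⁻¹ * ∫ z in {z : ℝ | R < |z|}, z ^ 2 * f z := integral_const_mul _ _
  have h3 : (∫ z in {z : ℝ | R < |z|}, z ^ 2 * f z) ≤ ∫ z, z ^ 2 * f z :=
    setIntegral_le_integral hz (Eventually.of_forall fun z =>
      mul_nonneg (sq_nonneg z) (hnn z))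
  have h4 : (R ^ 2)⁻¹ * (∫ z in {z : ℝ | R < |z|}, z ^ 2 * f z)
      ≤ (R ^ 2)⁻¹ * ∫ z, z ^ 2 * f z :=
    mul_le_mul_of_nonneg_left h3 (by positivity)
  rw [div_eq_inv_mul]
  linarith [hmono, h2 ▸ hmono]


/-- Uniformly small mass at infinity for solutions of `(S_ε)`. -/
theorem small_mass_at_infinity (θ r1 r2 g1 g2 κ1 κ2 m1 m2 : ℝ)
    (hθ : 0 < θ) (hg1 : 0 < g1) (hg2 : 0 < g2) (hκ1 : 0 < κ1) (hκ2 : 0 < κ2)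
    (hm1 : 0 < m1) (hm2 : 0 < m2)
    (hrm : 0 < max (r1 - m1) (r2 - m2)) :
    ∀ η : ℝ, 0 < η →
      ∃ R : ℝ, 0 < R ∧
        ∀ ε : ℝ, 0 < ε → ε ≤ 1 →
          ∀ n1 n2 : ℝ → ℝ, IsAdmissible n1 n2 → SolvesS θ r1 r2 g1 g2 κ1 κ2 m1 m2 ε n1 n2 →
            (∫ z in {z : ℝ | R < |z|}, n1 z) < η ∧
            (∫ z in {z : ℝ | R < |z|}, n2 z) < η := by
  intro η hη
  have hM : (0 : ℝ) ≤ max |r1| |r2| := le_trans (abs_nonneg r1) (le_max_left _ _)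
  set κm := min κ1 κ2 with hκm
  have hκmpos : 0 < κm := lt_min hκ1 hκ2
  set B := 2 * max |r1| |r2| / κm with hBdef
  have hBnn : 0 ≤ B := div_nonneg (by linarith) hκmpos.le
  set D1 := 2 * ((|r1| + m2) * B) / g1 + 2 * θ ^ 2 * B with hD1def
  set D2 := 2 * ((|r2| + m1) * B) / g2 + 2 * θ ^ 2 * B with hD2def
  have hD1nn : 0 ≤ D1 := by
    have : 0 ≤ (|r1| + m2) * B := mul_nonneg (by positivity) hBnn
    have : 0 ≤ 2 * ((|r1| + m2) * B) / g1 := by positivity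
    have : 0 ≤ 2 * θ ^ 2 * B := by positivity
    rw [hD1def]; linarith
  have hD2nn : 0 ≤ D2 := by
    have : 0 ≤ (|r2| + m1) * B := mul_nonneg (by positivity) hBnn
    have : 0 ≤ 2 * ((|r2| + m1) * B) / g2 := by positivity
    have : 0 ≤ 2 * θ ^ 2 * B := by positivity
    rw [hD2def]; linarith
  set D := max D1 D2 + 1 with hDdef
  have hDpos : 0 < D := by
    have : D1 ≤ max D1 D2 := le_max_left _ _
    rw [hDdef]; linarith
  have hD1ltD : D1 < D := by
    have : D1 ≤ max D1 D2 := le_max_left _ _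
    rw [hDdef]; linarith
  have hD2ltD : D2 < D := by
    have : D2 ≤ max D1 D2 := le_max_right _ _
    rw [hDdef]; linarith
  set R := Real.sqrt (D / η) with hRdef
  have hRpos : 0 < R := Real.sqrt_pos.mpr (by positivity)
  have hR2 : R ^ 2 = D / η := Real.sq_sqrt (by positivity)
  have hR2pos : 0 < R ^ 2 := by positivity
  have hDR : D / R ^ 2 = η := by
    rw [hR2]
    field_simp
  refine ⟨R, hRpos, ?_⟩
  intro ε hεpos hε1 n1 n2 hadm hsol
  obtain ⟨hp1, hp2, hc1, hc2, hi1, hi2, hz1, hz2, ht1, ht2, htd1, htd2⟩ := hadm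
  set N1 := ∫ x, n1 x with hN1def
  set N2 := ∫ x, n2 x with hN2def
  have hN1nn : 0 ≤ N1 := integral_nonneg fun z => (hp1 z).le
  have hN2nn : 0 ≤ N2 := integral_nonneg fun z => (hp2 z).le
  have E1 : g1 * (∫ z, (z + θ) ^ 2 * n1 z) = (r1 - m1 - κ1 * N1) * N1 + m2 * N2 := by
    rw [hN1def, hN2def]
    exact key_identity n1 n2 r1 g1 κ1 m1 m2 θ ε hεpos.ne' hc1 (fun z => (hp1 z).le)
      hi1 hz1 hi2 htd1 (fun z => by
        have h := (hsol z).1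
        simp only [R1] at h
        rw [h])
  have E2 : g2 * (∫ z, (z + -θ) ^ 2 * n2 z) = (r2 - m2 - κ2 * N2) * N2 + m1 * N1 := by
    rw [hN1def, hN2def]
    exact key_identity n2 n1 r2 g2 κ2 m2 m1 (-θ) ε hεpos.ne' hc2 (fun z => (hp2 z).le)
      hi2 hz2 hi1 htd2 (fun z => by
        have h := (hsol z).2
        simp only [R2] at h
        rw [h]; ring)
  set P1 := ∫ z, (z + θ) ^ 2 * n1 z with hP1def
  set P2 := ∫ z, (z + -θ) ^ 2 * n2 z with hP2def
  have hP1nn : 0 ≤ P1 :=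
    integral_nonneg fun z => mul_nonneg (sq_nonneg _) (hp1 z).le
  have hP2nn : 0 ≤ P2 :=
    integral_nonneg fun z => mul_nonneg (sq_nonneg _) (hp2 z).le
  -- mass bound
  have hsum : κ1 * N1 ^ 2 + κ2 * N2 ^ 2 ≤ r1 * N1 + r2 * N2 := by
    have e1 : 0 ≤ g1 * P1 := mul_nonneg hg1.le hP1nn
    have e2 : 0 ≤ g2 * P2 := mul_nonneg hg2.le hP2nn
    linarith [E1, E2, e1, e2]
  have hSB : N1 + N2 ≤ B := by
    by_contra hcon
    push_neg at hcon
    have hS : 0 < N1 + N2 := lt_of_le_of_lt hBnn hcon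
    have hcon' : 2 * max |r1| |r2| < (N1 + N2) * κm := by
      rw [hBdef] at hcon
      exact (div_lt_iff₀ hκmpos).mp hcon
    have hMN : r1 * N1 + r2 * N2 ≤ max |r1| |r2| * (N1 + N2) := by
      have h1 := mul_le_mul_of_nonneg_right
        (le_trans (le_abs_self r1) (le_max_left |r1| |r2|)) hN1nn
      have h2 := mul_le_mul_of_nonneg_right
        (le_trans (le_abs_self r2) (le_max_right |r1| |r2|)) hN2nn
      linarith [h1, h2]
    have hκN : κm * (N1 ^ 2 + N2 ^ 2) ≤ κ1 * N1 ^ 2 + κ2 * N2 ^ 2 := by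
      have h1 := mul_le_mul_of_nonneg_right (min_le_left κ1 κ2) (sq_nonneg N1)
      have h2 := mul_le_mul_of_nonneg_right (min_le_right κ1 κ2) (sq_nonneg N2)
      rw [hκm]; linarith [h1, h2]
    have hS2 : (N1 + N2) ^ 2 ≤ 2 * (N1 ^ 2 + N2 ^ 2) := by linarith [sq_nonneg (N1 - N2)]
    have hfinal : κm * (N1 + N2) ^ 2 ≤ 2 * (max |r1| |r2|) * (N1 + N2) := by
      linarith [mul_le_mul_of_nonneg_left hS2 hκmpos.le, hκN, hMN, hsum]
    linarith [mul_lt_mul_of_pos_right hcon' hS, hfinal]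
  have hN1B : N1 ≤ B := by linarith
  have hN2B : N2 ≤ B := by linarith
  -- second moment bounds
  have hgP1 : g1 * P1 ≤ (|r1| + m2) * B := by
    have h1 : (r1 - m1 - κ1 * N1) * N1 ≤ |r1| * N1 :=
      mul_le_mul_of_nonneg_right
        (by linarith [le_abs_self r1, mul_nonneg hκ1.le hN1nn]) hN1nn
    have h2 : |r1| * N1 ≤ |r1| * B := mul_le_mul_of_nonneg_left hN1B (abs_nonneg r1)
    have h3 : m2 * N2 ≤ m2 * B := mul_le_mul_of_nonneg_left hN2B hm2.le
    linarith [E1, h1, h2, h3]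
  have hgP2 : g2 * P2 ≤ (|r2| + m1) * B := by
    have h1 : (r2 - m2 - κ2 * N2) * N2 ≤ |r2| * N2 :=
      mul_le_mul_of_nonneg_right
        (by linarith [le_abs_self r2, mul_nonneg hκ2.le hN2nn]) hN2nn
    have h2 : |r2| * N2 ≤ |r2| * B := mul_le_mul_of_nonneg_left hN2B (abs_nonneg r2)
    have h3 : m1 * N1 ≤ m1 * B := mul_le_mul_of_nonneg_left hN1B hm1.le
    linarith [E2, h1, h2, h3]
  have hP1le : P1 ≤ (|r1| + m2) * B / g1 := (le_div_iff₀ hg1).mpr (by linarith [hgP1])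
  have hP2le : P2 ≤ (|r2| + m1) * B / g2 := (le_div_iff₀ hg2).mpr (by linarith [hgP2])
  have hP1int : Integrable (fun z => (z + θ) ^ 2 * n1 z) :=
    sq_mul_integrable θ hc1.continuous (fun z => (hp1 z).le) hi1 hz1
  have hP2int : Integrable (fun z => (z + -θ) ^ 2 * n2 z) :=
    sq_mul_integrable (-θ) hc2.continuous (fun z => (hp2 z).le) hi2 hz2
  have hQ1 : (∫ z, z ^ 2 * n1 z) ≤ 2 * P1 + 2 * θ ^ 2 * N1 := by
    have hle : ∀ z, z ^ 2 * n1 z ≤ 2 * ((z + θ) ^ 2 * n1 z) + 2 * θ ^ 2 * n1 z := by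
      intro z
      linarith [mul_nonneg (sq_nonneg (z + 2 * θ)) (hp1 z).le]
    calc (∫ z, z ^ 2 * n1 z)
        ≤ ∫ z, (2 * ((z + θ) ^ 2 * n1 z) + 2 * θ ^ 2 * n1 z) :=
          integral_mono hz1 ((hP1int.const_mul 2).add (hi1.const_mul (2 * θ ^ 2))) hle
      _ = 2 * P1 + 2 * θ ^ 2 * N1 := by
          rw [integral_add (by exact hP1int.const_mul 2) (by exact hi1.const_mul (2 * θ ^ 2)),
            integral_const_mul, integral_const_mul]
  have hQ2 : (∫ z, z ^ 2 * n2 z) ≤ 2 * P2 + 2 * θ ^ 2 * N2 := by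
    have hle : ∀ z, z ^ 2 * n2 z ≤ 2 * ((z + -θ) ^ 2 * n2 z) + 2 * θ ^ 2 * n2 z := by
      intro z
      linarith [mul_nonneg (sq_nonneg (z - 2 * θ)) (hp2 z).le]
    calc (∫ z, z ^ 2 * n2 z)
        ≤ ∫ z, (2 * ((z + -θ) ^ 2 * n2 z) + 2 * θ ^ 2 * n2 z) :=
          integral_mono hz2 ((hP2int.const_mul 2).add (hi2.const_mul (2 * θ ^ 2))) hle
      _ = 2 * P2 + 2 * θ ^ 2 * N2 := by
          rw [integral_add (by exact hP2int.const_mul 2) (by exact hi2.const_mul (2 * θ ^ 2)),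
            integral_const_mul, integral_const_mul]
  have hQ1D : (∫ z, z ^ 2 * n1 z) ≤ D1 := by
    have h1 : 2 * θ ^ 2 * N1 ≤ 2 * θ ^ 2 * B := mul_le_mul_of_nonneg_left hN1B (by positivity)
    rw [hD1def]; rw [mul_div_assoc]
    linarith [hP1le, hQ1, h1]
  have hQ2D : (∫ z, z ^ 2 * n2 z) ≤ D2 := by
    have h1 : 2 * θ ^ 2 * N2 ≤ 2 * θ ^ 2 * B := mul_le_mul_of_nonneg_left hN2B (by positivity)
    rw [hD2def]; rw [mul_div_assoc]
    linarith [hP2le, hQ2, h1]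
  have hfin : ∀ Q Dk : ℝ, Q ≤ Dk → Dk < D → Q / R ^ 2 < η := by
    intro Q Dk h1 h2
    have h3 : Q / R ^ 2 < D / R ^ 2 :=
      (div_lt_div_iff_of_pos_right hR2pos).mpr (lt_of_le_of_lt h1 h2)
    rwa [hDR] at h3
  exact ⟨lt_of_le_of_lt (tail_bound n1 (fun z => (hp1 z).le) hi1 hz1 R hRpos)
      (hfin _ D1 hQ1D hD1ltD),
    lt_of_le_of_lt (tail_bound n2 (fun z => (hp2 z).le) hi2 hz2 R hRpos)
      (hfin _ D2 hQ2D hD2ltD)⟩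
end

section
/- Let θ > 0, g_1 > 0, κ_1 > 0, m_1 ≥ 0, r_1 ∈ ℝ and ε > 0 with r_1 − m_1 − ε√g_1 > 0. Set N = (r_1 − m_1 − ε√g_1)/κ_1 and n(z) = g_1^{1/4} N (2πε)^{−1/2} exp(−√g_1 (z+θ)² / (2ε)). Then ∫_ℝ n(z) dz = N and, for every z ∈ ℝ, −ε² n''(z) = n(z)(r_1 − g_1(z+θ)² − κ_1 N) − m_1 n(z); that is, n is an explicit positive integrable solution of the first equation of the system in the source–sink case m_2 = 0. -/
open Real Set Filter MeasureTheory

/-- The explicit Gaussian solution of the first equation in the source-sink case `m2 = 0`. -/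
theorem explicit_gaussian_solution (θ g1 κ1 m1 r1 ε : ℝ)
    (hθ : 0 < θ) (hg1 : 0 < g1) (hκ1 : 0 < κ1) (hm1 : 0 ≤ m1) (hε : 0 < ε)
    (hpos : 0 < r1 - m1 - ε * Real.sqrt g1) :
    let N : ℝ := (r1 - m1 - ε * Real.sqrt g1) / κ1
    let n : ℝ → ℝ := fun z =>
      g1 ^ ((1 : ℝ) / 4) * N / Real.sqrt (2 * Real.pi * ε) *
        Real.exp (-(Real.sqrt g1 * (z + θ) ^ 2) / (2 * ε))
    (∀ z : ℝ, 0 < n z) ∧ Integrable n ∧ (∫ z, n z) = N ∧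
      ∀ z : ℝ, -(ε ^ 2) * deriv (deriv n) z =
        n z * (r1 - g1 * (z + θ) ^ 2 - κ1 * N) - m1 * n z := by
  intro N n
  have hsg : 0 < Real.sqrt g1 := Real.sqrt_pos.mpr hg1
  have hN : 0 < N := div_pos hpos hκ1
  have hg4 : (0:ℝ) < g1 ^ ((1:ℝ)/4) := Real.rpow_pos_of_pos hg1 _
  have h2πε : (0:ℝ) < 2 * Real.pi * ε := by positivity
  have hC : 0 < g1 ^ ((1:ℝ)/4) * N / Real.sqrt (2 * Real.pi * ε) :=
    div_pos (mul_pos hg4 hN) (Real.sqrt_pos.mpr h2πε)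
  set C : ℝ := g1 ^ ((1:ℝ)/4) * N / Real.sqrt (2 * Real.pi * ε) with hCdef
  set a : ℝ := Real.sqrt g1 / (2 * ε) with hadef
  have ha : 0 < a := div_pos hsg (by linarith)
  have hεne : (2*ε : ℝ) ≠ 0 := by positivity
  have hn_fun : n = fun z => C * Real.exp (-a * (z + θ) ^ 2) := by
    funext z
    have : -(Real.sqrt g1 * (z + θ) ^ 2) / (2 * ε) = -a * (z + θ) ^ 2 := by
      rw [hadef]; ring
    simp only [n, this]
    rfl
  have hnpos : ∀ z, 0 < n z := by
    intro z; rw [hn_fun]; exact mul_pos hC (Real.exp_pos _)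
  -- integrability
  have hint : Integrable n := by
    rw [hn_fun]
    exact ((integrable_exp_neg_mul_sq ha).comp_add_right θ).const_mul C
  -- integral value
  have hsqrt4 : Real.sqrt (Real.sqrt g1) = g1 ^ ((1:ℝ)/4) := by
    rw [Real.sqrt_eq_rpow, Real.sqrt_eq_rpow, ← Real.rpow_mul hg1.le]
    norm_num
  have hintval : (∫ z, n z) = N := by
    rw [hn_fun]
    rw [MeasureTheory.integral_const_mul]
    have := MeasureTheory.integral_add_right_eq_self (μ := volume) (fun x : ℝ => Real.exp (-a * x ^ 2)) θ
    rw [this, integral_gaussian]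
    have hπa : Real.pi / a = (2 * Real.pi * ε) / Real.sqrt g1 := by
      rw [hadef]; field_simp
    rw [hπa, Real.sqrt_div' (2 * Real.pi * ε) ?_]
    · rw [hsqrt4, hCdef]
      field_simp
    · exact hsg.le
  refine ⟨hnpos, hint, hintval, ?_⟩
  -- the ODE
  have hd1 : ∀ z : ℝ, HasDerivAt n ((-2*a) * (z + θ) * n z) z := by
    intro z
    have h1 : HasDerivAt (fun z : ℝ => -a * (z + θ) ^ 2) (-a * (2 * (z + θ))) z := by
      have h := (((hasDerivAt_id z).add_const θ).pow 2).const_mul (-a)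
      simpa using h
    have h2 := (h1.exp).const_mul C
    rw [hn_fun]
    convert h2 using 1
    · rfl
    beta_reduce
    show -2 * a * (z + θ) * (C * rexp (-a * (z + θ) ^ 2)) = _
    ring
    rfl
  have hderiv1 : deriv n = fun z => (-2*a) * (z + θ) * n z := funext fun z => (hd1 z).deriv
  have hd2 : ∀ z : ℝ, HasDerivAt (deriv n)
      ((-2*a) * n z + (-2*a) * (z + θ) * ((-2*a) * (z + θ) * n z)) z := by
    intro z
    rw [hderiv1]
    have hu : HasDerivAt (fun z : ℝ => (-2*a) * (z + θ)) (-2*a) z := by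
      simpa using ((hasDerivAt_id z).add_const θ).const_mul (-2*a)
    exact hu.mul (hd1 z)
  intro z
  rw [(hd2 z).deriv]
  have hsq : Real.sqrt g1 ^ 2 = g1 := Real.sq_sqrt hg1.le
  have hκN : κ1 * N = r1 - m1 - ε * Real.sqrt g1 := by
    rw [mul_div_cancel₀ _ hκ1.ne']
  have ha2 : a * (2 * ε) = Real.sqrt g1 := by
    rw [hadef]; field_simp
  have key : -(ε^2) * ((-2*a) * n z + (-2*a) * (z + θ) * ((-2*a) * (z + θ) * n z))
      = n z * (ε * Real.sqrt g1 - g1 * (z + θ)^2) := by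
    have h4 : 4 * a^2 * ε^2 = g1 := by
      have : (a * (2*ε))^2 = Real.sqrt g1 ^ 2 := by rw [ha2]
      nlinarith [this]
    have h2 : 2 * a * ε^2 = ε * Real.sqrt g1 := by nlinarith [ha2]
    have hrw : -(ε^2) * ((-2*a) * n z + (-2*a) * (z + θ) * ((-2*a) * (z + θ) * n z))
        = n z * (2*a*ε^2) - n z * ((4*a^2*ε^2) * (z+θ)^2) := by ring
    rw [hrw, h2, h4]; ring
  rw [key, hκN]
  ring
end

section
/- Assume m_1 > 0, m_2 = 0 and r_1 − m_1 > 0, and set N_1^{M*} = (r_1 − m_1)/κ_1. Then in patch 2 there exists a unique patch-2 ESS, and: (i) it is the two-point set {−θ, θ} if and only if m_1(r_1 − m_1)/κ_1 < 4 g_2 θ² r_2/κ_2; in that case its weights are α = m_1(r_1 − m_1)/(4 g_2 θ² κ_1) at −θ and β = r_2/κ_2 − m_1(r_1 − m_1)/(4 g_2 θ² κ_1) at θ, with total size N_2^{D*} = α + β = r_2/κ_2; (ii) if m_1(r_1 − m_1)/κ_1 ≥ 4 g_2 θ² r_2/κ_2, the unique patch-2 ESS is the singleton {−θ} with total size N_2^{M*}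 = (1/(2κ_2))[r_2 − 4 g_2 θ² + √((r_2 − 4 g_2 θ²)² + 4 (κ_2/κ_1) m_1 (r_1 − m_1))]. -/
open Real Set Filter MeasureTheory

/-- Effective fitness in patch 2 in the source-sink case `m2 = 0`. -/
noncomputable def W2 (θ r1 r2 g1 g2 κ1 κ2 m1 : ℝ) (z N2 : ℝ) : ℝ :=
  max (-(g1 * (z + θ) ^ 2)) (r2 - g2 * (z - θ) ^ 2 - κ2 * N2)

/-- A patch-2 ESS configuration: a nonempty finite set with positive weights such that the
patch-2 effective fitness is nonpositive, vanishes on the set, and the demographic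
equilibrium conditions hold atom-wise as measures (with immigration `m1 N1M` concentrated
at `-θ`). -/
def IsESS2Wts (θ r1 r2 g1 g2 κ1 κ2 m1 : ℝ) (Ω : Finset ℝ) (β : ℝ → ℝ) : Prop :=
  Ω.Nonempty ∧ (∀ z ∈ Ω, 0 < β z) ∧
  (∀ z : ℝ, W2 θ r1 r2 g1 g2 κ1 κ2 m1 z (∑ x ∈ Ω, β x) ≤ 0) ∧
  (∀ z ∈ Ω, W2 θ r1 r2 g1 g2 κ1 κ2 m1 z (∑ x ∈ Ω, β x) = 0) ∧
  (∀ z : ℝ,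
    (if z ∈ Ω then β z * (r2 - g2 * (z - θ) ^ 2 - κ2 * (∑ x ∈ Ω, β x)) else 0) +
      m1 * ((r1 - m1) / κ1) * (if z = -θ then 1 else 0) = 0)

def IsESS2 (θ r1 r2 g1 g2 κ1 κ2 m1 : ℝ) (Ω : Finset ℝ) : Prop :=
  ∃ β : ℝ → ℝ, IsESS2Wts θ r1 r2 g1 g2 κ1 κ2 m1 Ω β

lemma ess_classify (θ r1 r2 g1 g2 κ1 κ2 m1 : ℝ)
    (hθ : 0 < θ) (hg2 : 0 < g2) (hκ1 : 0 < κ1) (hκ2 : 0 < κ2)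
    (hm1 : 0 < m1) (hr1 : 0 < r1 - m1)
    (Ω : Finset ℝ) (β : ℝ → ℝ) (h : IsESS2Wts θ r1 r2 g1 g2 κ1 κ2 m1 Ω β) :
    (Ω = ({-θ, θ} : Finset ℝ) ∧ m1 * (r1 - m1) / κ1 < 4 * g2 * θ ^ 2 * r2 / κ2) ∨
    (Ω = ({-θ} : Finset ℝ) ∧ 4 * g2 * θ ^ 2 * r2 / κ2 ≤ m1 * (r1 - m1) / κ1) := by
  obtain ⟨hne, hpos, hW, hW0, hatom⟩ := h
  have hne' : (-θ : ℝ) ≠ θ := by intro hc; linarith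
  have hC : 0 < m1 * ((r1 - m1) / κ1) := mul_pos hm1 (div_pos hr1 hκ1)
  set N := ∑ x ∈ Ω, β x with hNdef
  have hmem : -θ ∈ Ω := by
    by_contra hc
    have h0 := hatom (-θ)
    rw [if_neg hc, if_pos rfl] at h0
    linarith
  have heqθ : β (-θ) * (r2 - g2 * (-θ - θ) ^ 2 - κ2 * N) + m1 * ((r1 - m1) / κ1) = 0 := by
    have h0 := hatom (-θ)
    rw [if_pos hmem, if_pos rfl] at h0
    linarith
  have hNr : r2 - κ2 * N ≤ 0 := by
    have h1 := le_of_max_le_right (hW θ)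
    unfold W2 at h1
    nlinarith [le_of_max_le_right (hW θ)]
  have hsub : ∀ z ∈ Ω, z = -θ ∨ z = θ := by
    intro z hz
    by_cases hzθ : z = -θ
    · exact Or.inl hzθ
    right
    have hat := hatom z
    rw [if_pos hz, if_neg hzθ] at hat
    have hR : r2 - g2 * (z - θ) ^ 2 - κ2 * N = 0 := by
      rcases mul_eq_zero.mp (by linarith : β z * (r2 - g2 * (z - θ) ^ 2 - κ2 * N) = 0) with h' | h'
      · exact absurd h' (ne_of_gt (hpos z hz))
      · exact h'
    have hsq : (z - θ) ^ 2 ≤ 0 := by nlinarith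
    have : z - θ = 0 := by nlinarith [sq_nonneg (z - θ)]
    linarith
  by_cases hθΩ : θ ∈ Ω
  · -- dimorphic case
    left
    have hΩ : Ω = ({-θ, θ} : Finset ℝ) := by
      apply Finset.Subset.antisymm
      · intro z hz
        rcases hsub z hz with h' | h' <;> simp [h']
      · intro z hz
        rcases Finset.mem_insert.mp hz with h' | h'
        · exact h' ▸ hmem
        · exact (Finset.mem_singleton.mp h') ▸ hθΩ
    have hNeq : κ2 * N = r2 := by
      have hat := hatom θ
      rw [if_pos hθΩ, if_neg (hne'.symm)] at hat
      rcases mul_eq_zero.mp (by linarith : β θ * (r2 - g2 * (θ - θ) ^ 2 - κ2 * N) = 0) with h' | h'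
      · exact absurd h' (ne_of_gt (hpos θ hθΩ))
      · nlinarith [h']
    have hα : β (-θ) * (4 * g2 * θ ^ 2) = m1 * ((r1 - m1) / κ1) := by
      linear_combination -heqθ - β (-θ) * hNeq
    have hsum : β (-θ) + β θ = N := by
      rw [hNdef, hΩ, Finset.sum_pair hne']
    have hβθ : 0 < β θ := hpos θ hθΩ
    refine ⟨hΩ, ?_⟩
    rw [div_lt_div_iff₀ hκ1 hκ2]
    have hdiv : (r1 - m1) / κ1 * κ1 = r1 - m1 := div_mul_cancel₀ _ (ne_of_gt hκ1)
    have hαβ2 : β (-θ) * (4 * g2 * θ ^ 2) * κ1 * κ2 = m1 * (r1 - m1) * κ2 := by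
      linear_combination κ1 * κ2 * hα + m1 * κ2 * hdiv
    have hNeq2 : 4 * g2 * θ ^ 2 * κ1 * (κ2 * N) = 4 * g2 * θ ^ 2 * κ1 * r2 := by rw [hNeq]
    have hsum2 : 4 * g2 * θ ^ 2 * κ1 * κ2 * (β (-θ) + β θ) = 4 * g2 * θ ^ 2 * κ1 * κ2 * N := by
      rw [hsum]
    nlinarith [hαβ2, hNeq2, hsum2, mul_pos hβθ (by positivity : (0:ℝ) < 4 * g2 * θ ^ 2 * κ1 * κ2)]
  · -- monomorphic case
    right
    have hΩ : Ω = ({-θ} : Finset ℝ) := by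
      apply Finset.Subset.antisymm
      · intro z hz
        rcases hsub z hz with h' | h'
        · simp [h']
        · exact absurd (h' ▸ hz) hθΩ
      · intro z hz
        exact (Finset.mem_singleton.mp hz) ▸ hmem
    have hNβ : N = β (-θ) := by rw [hNdef, hΩ, Finset.sum_singleton]
    have hNpos : 0 < N := hNβ ▸ hpos _ hmem
    refine ⟨hΩ, ?_⟩
    rw [div_le_div_iff₀ hκ2 hκ1]
    have hdiv : (r1 - m1) / κ1 * κ1 = r1 - m1 := div_mul_cancel₀ _ (ne_of_gt hκ1)
    have key : N * (r2 - 4 * g2 * θ ^ 2 - κ2 * N) * κ1 + m1 * (r1 - m1) = 0 := by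
      have h' := heqθ
      rw [← hNβ] at h'
      linear_combination κ1 * h' - m1 * hdiv
    have key2 : N * (r2 - 4 * g2 * θ ^ 2 - κ2 * N) * κ1 * κ2 + m1 * (r1 - m1) * κ2 = 0 := by
      linear_combination κ2 * key
    nlinarith [key2, mul_nonneg (mul_nonneg hκ1.le (by linarith : (0:ℝ) ≤ κ2 * N - r2)) (by nlinarith : (0:ℝ) ≤ κ2 * N + 4 * g2 * θ ^ 2)]

lemma ess_dim (θ r1 r2 g1 g2 κ1 κ2 m1 : ℝ)
    (hθ : 0 < θ) (hg1 : 0 < g1) (hg2 : 0 < g2) (hκ1 : 0 < κ1) (hκ2 : 0 < κ2)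
    (hm1 : 0 < m1) (hr1 : 0 < r1 - m1)
    (hlt : m1 * (r1 - m1) / κ1 < 4 * g2 * θ ^ 2 * r2 / κ2) :
    IsESS2Wts θ r1 r2 g1 g2 κ1 κ2 m1 ({-θ, θ} : Finset ℝ)
      (fun z => if z = -θ then m1 * (r1 - m1) / (4 * g2 * θ ^ 2 * κ1)
        else r2 / κ2 - m1 * (r1 - m1) / (4 * g2 * θ ^ 2 * κ1)) := by
  have hne' : (-θ : ℝ) ≠ θ := by intro hc; linarith
  set α : ℝ := m1 * (r1 - m1) / (4 * g2 * θ ^ 2 * κ1) with hαdef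
  have hαpos : 0 < α := by
    apply div_pos (mul_pos hm1 hr1) (by positivity)
  have hαlt : α < r2 / κ2 := by
    rw [hαdef, div_lt_div_iff₀ (by positivity) hκ2]
    rw [div_lt_div_iff₀ hκ1 hκ2] at hlt
    nlinarith
  set β : ℝ → ℝ := fun z => if z = -θ then α else r2 / κ2 - α with hβdef
  have hβ1 : β (-θ) = α := by simp [hβdef]
  have hβ2 : β θ = r2 / κ2 - α := by simp [hβdef, hne'.symm]
  have hNval : (∑ x ∈ ({-θ, θ} : Finset ℝ), β x) = r2 / κ2 := by
    rw [Finset.sum_pair hne', hβ1, hβ2]; ring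
  have hκ2r : κ2 * (r2 / κ2) = r2 := by field_simp
  refine ⟨⟨-θ, by simp⟩, ?_, ?_, ?_, ?_⟩
  · intro z hz
    rcases Finset.mem_insert.mp hz with h' | h'
    · rw [h', hβ1]; exact hαpos
    · rw [Finset.mem_singleton.mp h', hβ2]; linarith
  · intro z
    rw [hNval]
    unfold W2
    apply max_le
    · nlinarith [sq_nonneg (z + θ)]
    · nlinarith [sq_nonneg (z - θ)]
  · intro z hz
    rw [hNval]
    unfold W2
    rcases Finset.mem_insert.mp hz with h' | h'
    · subst h'
      have h1 : -(g1 * (-θ + θ) ^ 2) = 0 := by ring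
      rw [h1, max_eq_left (by nlinarith)]
    · rw [Finset.mem_singleton.mp h']
      have h2 : r2 - g2 * (θ - θ) ^ 2 - κ2 * (r2 / κ2) = 0 := by
        rw [hκ2r]; ring
      rw [h2, max_eq_right (by nlinarith [sq_nonneg (θ + θ)])]
  · intro z
    rw [hNval]
    by_cases hz1 : z = -θ
    · subst hz1
      rw [if_pos (by simp), if_pos rfl, hβ1]
      have : α * (4 * g2 * θ ^ 2) = m1 * ((r1 - m1) / κ1) := by
        rw [hαdef]; field_simp
      nlinarith [this, hκ2r]
    · by_cases hz2 : z = θ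
      · rw [hz2]
        rw [if_pos (by simp : (θ:ℝ) ∈ ({-θ, θ} : Finset ℝ)), if_neg (show (θ:ℝ) ≠ -θ from fun hc => hne' hc.symm)]
        have : r2 - g2 * (θ - θ) ^ 2 - κ2 * (r2 / κ2) = 0 := by rw [hκ2r]; ring
        rw [this]
        simp
      · rw [if_neg (by simp [hz1, hz2]), if_neg hz1]
        simp

set_option maxHeartbeats 1000000 in
lemma ess_mono (θ r1 r2 g1 g2 κ1 κ2 m1 : ℝ)
    (hθ : 0 < θ) (hg1 : 0 < g1) (hg2 : 0 < g2) (hκ1 : 0 < κ1) (hκ2 : 0 < κ2)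
    (hm1 : 0 < m1) (hr1 : 0 < r1 - m1)
    (hle : 4 * g2 * θ ^ 2 * r2 / κ2 ≤ m1 * (r1 - m1) / κ1) :
    IsESS2Wts θ r1 r2 g1 g2 κ1 κ2 m1 ({-θ} : Finset ℝ)
      (fun _ => (r2 - 4 * g2 * θ ^ 2 +
        Real.sqrt ((r2 - 4 * g2 * θ ^ 2) ^ 2 + 4 * (κ2 / κ1) * m1 * (r1 - m1))) /
        (2 * κ2)) := by
  obtain ⟨a, hadef⟩ : ∃ x : ℝ, x = r2 - 4 * g2 * θ ^ 2 := ⟨_, rfl⟩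
  obtain ⟨D, hDdef⟩ : ∃ x : ℝ, x = a ^ 2 + 4 * (κ2 / κ1) * m1 * (r1 - m1) := ⟨_, rfl⟩
  obtain ⟨s, hsdef⟩ : ∃ x : ℝ, x = Real.sqrt D := ⟨_, rfl⟩
  obtain ⟨Nm, hNmdef⟩ : ∃ x : ℝ, x = (a + s) / (2 * κ2) := ⟨_, rfl⟩
  have hfun : (fun _ : ℝ => (r2 - 4 * g2 * θ ^ 2 +
      Real.sqrt ((r2 - 4 * g2 * θ ^ 2) ^ 2 + 4 * (κ2 / κ1) * m1 * (r1 - m1))) /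
      (2 * κ2)) = (fun _ : ℝ => Nm) := by
    rw [hNmdef, hsdef, hDdef, hadef]
  rw [hfun]
  have hT : 0 < 4 * (κ2 / κ1) * m1 * (r1 - m1) := by positivity
  have hD : 0 < D := by rw [hDdef]; nlinarith [sq_nonneg a, hT]
  have hs2 : s ^ 2 = D := by rw [hsdef]; exact Real.sq_sqrt hD.le
  have hs0 : 0 ≤ s := hsdef ▸ Real.sqrt_nonneg D
  have habs : |a| < s := by
    rw [hsdef, ← Real.sqrt_sq_eq_abs]
    exact Real.sqrt_lt_sqrt (sq_nonneg a) (by rw [hDdef]; nlinarith [hT])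
  have haspos : 0 < a + s := by
    have := neg_abs_le a
    linarith [abs_nonneg a]
  have hNmpos : 0 < Nm := hNmdef ▸ div_pos haspos (by positivity)
  have h2N : 2 * κ2 * Nm = a + s := by
    rw [hNmdef]; field_simp
  have hf : 4 * (κ2 / κ1) * m1 * (r1 - m1) = 4 * κ2 * (m1 * ((r1 - m1) / κ1)) := by
    field_simp
  have hs2' : s ^ 2 = a ^ 2 + 4 * κ2 * (m1 * ((r1 - m1) / κ1)) := by
    rw [hs2, hDdef, hf]
  have keymul : (2 * κ2 * Nm) ^ 2 - 2 * a * (2 * κ2 * Nm) -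
      4 * κ2 * (m1 * ((r1 - m1) / κ1)) = 0 := by
    rw [h2N]
    linear_combination hs2'
  have key : Nm * (r2 - 4 * g2 * θ ^ 2 - κ2 * Nm) + m1 * ((r1 - m1) / κ1) = 0 := by
    have h4 : 4 * κ2 * (Nm * (a - κ2 * Nm) + m1 * ((r1 - m1) / κ1)) = 0 := by
      linear_combination -keymul
    have h4' : Nm * (a - κ2 * Nm) + m1 * ((r1 - m1) / κ1) = 0 :=
      (mul_eq_zero.mp h4).resolve_left (by positivity)
    linear_combination h4' - Nm * hadef
  have hCpos : 0 < m1 * ((r1 - m1) / κ1) := mul_pos hm1 (div_pos hr1 hκ1)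
  have hle2 : 4 * g2 * θ ^ 2 * r2 ≤ m1 * ((r1 - m1) / κ1) * κ2 := by
    have h1 : m1 * ((r1 - m1) / κ1) * κ2 = m1 * (r1 - m1) * κ2 / κ1 := by ring
    rw [h1, le_div_iff₀ hκ1]
    rw [div_le_div_iff₀ hκ2 hκ1] at hle
    linarith
  have hNr : r2 ≤ κ2 * Nm := by
    have hpos2 : 0 < κ2 * Nm + 4 * g2 * θ ^ 2 := by positivity
    have key2 : κ2 * (Nm * (r2 - 4 * g2 * θ ^ 2 - κ2 * Nm)) +
        m1 * ((r1 - m1) / κ1) * κ2 = 0 := by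
      linear_combination κ2 * key
    nlinarith [key2, hle2, hpos2]
  have hRneg : r2 - g2 * (-θ - θ) ^ 2 - κ2 * Nm < 0 := by
    have hXneg : Nm * (r2 - 4 * g2 * θ ^ 2 - κ2 * Nm) = -(m1 * ((r1 - m1) / κ1)) := by
      linear_combination key
    by_contra hcon
    push_neg at hcon
    have h0 : (0:ℝ) ≤ r2 - 4 * g2 * θ ^ 2 - κ2 * Nm := by nlinarith
    nlinarith [mul_nonneg hNmpos.le h0]
  have hNsum : (∑ x ∈ ({-θ} : Finset ℝ), (fun _ : ℝ => Nm) x) = Nm := by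
    rw [Finset.sum_singleton]
  refine ⟨⟨-θ, by simp⟩, ?_, ?_, ?_, ?_⟩
  · intro z _; exact hNmpos
  · intro z
    rw [hNsum]
    unfold W2
    apply max_le
    · nlinarith [sq_nonneg (z + θ)]
    · nlinarith [mul_nonneg hg2.le (sq_nonneg (z - θ))]
  · intro z hz
    rw [hNsum, Finset.mem_singleton.mp hz]
    unfold W2
    have h1 : -(g1 * (-θ + θ) ^ 2) = 0 := by ring
    rw [h1, max_eq_left (by linarith [hRneg])]
  · intro z
    rw [hNsum]
    by_cases hz : z = -θ
    · rw [hz, if_pos (Finset.mem_singleton_self _), if_pos rfl]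
      simp only []
      linear_combination key
    · rw [if_neg (by simpa using hz), if_neg hz]
      simp

/-- In the source-sink case there is a unique patch-2 ESS: it is the dimorphic set
`{-θ, θ}` iff `m1 (r1 - m1)/κ1 < 4 g2 θ² r2/κ2` (with the indicated weights), and the
singleton `{-θ}` otherwise (with the indicated total size). -/
theorem sink_patch2_ESS (θ r1 r2 g1 g2 κ1 κ2 m1 : ℝ)
    (hθ : 0 < θ) (hg1 : 0 < g1) (hg2 : 0 < g2) (hκ1 : 0 < κ1) (hκ2 : 0 < κ2)
    (hm1 : 0 < m1) (hr1 : 0 < r1 - m1) :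
    (∃! Ω : Finset ℝ, IsESS2 θ r1 r2 g1 g2 κ1 κ2 m1 Ω) ∧
    ((∃ Ω : Finset ℝ, IsESS2 θ r1 r2 g1 g2 κ1 κ2 m1 Ω ∧ Ω.card = 2) ↔
      m1 * (r1 - m1) / κ1 < 4 * g2 * θ ^ 2 * r2 / κ2) ∧
    (m1 * (r1 - m1) / κ1 < 4 * g2 * θ ^ 2 * r2 / κ2 →
      (∀ Ω : Finset ℝ, IsESS2 θ r1 r2 g1 g2 κ1 κ2 m1 Ω → Ω = ({-θ, θ} : Finset ℝ)) ∧
      IsESS2Wts θ r1 r2 g1 g2 κ1 κ2 m1 ({-θ, θ} : Finset ℝ)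
        (fun z => if z = -θ then m1 * (r1 - m1) / (4 * g2 * θ ^ 2 * κ1)
          else r2 / κ2 - m1 * (r1 - m1) / (4 * g2 * θ ^ 2 * κ1)) ∧
      m1 * (r1 - m1) / (4 * g2 * θ ^ 2 * κ1) +
        (r2 / κ2 - m1 * (r1 - m1) / (4 * g2 * θ ^ 2 * κ1)) = r2 / κ2) ∧
    (4 * g2 * θ ^ 2 * r2 / κ2 ≤ m1 * (r1 - m1) / κ1 →
      (∀ Ω : Finset ℝ, IsESS2 θ r1 r2 g1 g2 κ1 κ2 m1 Ω → Ω = ({-θ} : Finset ℝ)) ∧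
      IsESS2Wts θ r1 r2 g1 g2 κ1 κ2 m1 ({-θ} : Finset ℝ)
        (fun _ => (r2 - 4 * g2 * θ ^ 2 +
          Real.sqrt ((r2 - 4 * g2 * θ ^ 2) ^ 2 + 4 * (κ2 / κ1) * m1 * (r1 - m1))) /
          (2 * κ2))) := by
  have hne' : (-θ : ℝ) ≠ θ := by intro hc; linarith
  by_cases hcase : m1 * (r1 - m1) / κ1 < 4 * g2 * θ ^ 2 * r2 / κ2
  · have hwts := ess_dim θ r1 r2 g1 g2 κ1 κ2 m1 hθ hg1 hg2 hκ1 hκ2 hm1 hr1 hcase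
    have huniq : ∀ Ω : Finset ℝ, IsESS2 θ r1 r2 g1 g2 κ1 κ2 m1 Ω →
        Ω = ({-θ, θ} : Finset ℝ) := by
      intro Ω hΩ
      obtain ⟨β, hβ⟩ := hΩ
      rcases ess_classify θ r1 r2 g1 g2 κ1 κ2 m1 hθ hg2 hκ1 hκ2 hm1 hr1 Ω β hβ with
        ⟨h1, _⟩ | ⟨_, h2⟩
      · exact h1
      · linarith
    refine ⟨⟨{-θ, θ}, ⟨_, hwts⟩, huniq⟩, ?_, ?_, ?_⟩
    · exact ⟨fun _ => hcase, fun _ => ⟨{-θ, θ}, ⟨_, hwts⟩, Finset.card_pair hne'⟩⟩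
    · exact fun _ => ⟨huniq, hwts, by ring⟩
    · intro hge; linarith
  · push_neg at hcase
    have hwts := ess_mono θ r1 r2 g1 g2 κ1 κ2 m1 hθ hg1 hg2 hκ1 hκ2 hm1 hr1 hcase
    have huniq : ∀ Ω : Finset ℝ, IsESS2 θ r1 r2 g1 g2 κ1 κ2 m1 Ω →
        Ω = ({-θ} : Finset ℝ) := by
      intro Ω hΩ
      obtain ⟨β, hβ⟩ := hΩ
      rcases ess_classify θ r1 r2 g1 g2 κ1 κ2 m1 hθ hg2 hκ1 hκ2 hm1 hr1 Ω β hβ with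
        ⟨_, h1⟩ | ⟨h2, _⟩
      · linarith
      · exact h2
    refine ⟨⟨{-θ}, ⟨_, hwts⟩, huniq⟩, ?_, ?_, ?_⟩
    · constructor
      · rintro ⟨Ω, hΩ, hcard⟩
        rw [huniq Ω hΩ] at hcard
        simp at hcard
      · intro hlt; linarith
    · intro hlt; linarith
    · exact fun _ => ⟨huniq, hwts⟩
end
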